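/- arXiv:2211.12669 — 5 statements merged into one kernel-verified Lean document; each statement's English description precedes it below -/
import Mathlib

section
/- Let P be a probability measure on Θ² = [0,1]×[0,1], and let 𝒬 be a set of probability measures on Θ², each absolutely continuous with respect to P, that is rearrangement invariant. Let 𝒬* := {Q* ∈ 𝒬 : Q* is a decreasing rearrangement (with respect to P) of some Q ∈ 𝒬}. Let t = (t₁,t₂) : Θ² → ℝ₊² be a bounded measurable transfer function whose total transfer T(θ,θ') := t₁(θ,θ') + t₂(θ',θ) is nondecreasing in each argument and satisfies P{(θ,θ') : T(θ,θ') = c} = 0 for every c ≥ 0. Then inf_{Q ∈ 𝒬} ∬_{Θ²} T dQ = inf_{Q* ∈ 𝒬*} ∬_{Θ²} T dQ*. -/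
open MeasureTheory

noncomputable section

abbrev Θ : Type := ↥(Set.Icc (0:ℝ) 1)

/-- `ν'` is a rearrangement of `ν` with respect to `μ`. -/
def IsRearrangement {Ω : Type*} [MeasurableSpace Ω] (μ ν ν' : Measure Ω) : Prop :=
  ∀ c : ENNReal, μ {ω | ν'.rnDeriv μ ω ≤ c} = μ {ω | ν.rnDeriv μ ω ≤ c}

/-- `ν'` is a decreasing rearrangement of `ν` with respect to `μ`: it is a rearrangement
and some version of its density is nonincreasing. -/
def IsDecreasingRearrangement {Ω : Type*} [MeasurableSpace Ω] [Preorder Ω]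
    (μ ν ν' : Measure Ω) : Prop :=
  IsRearrangement μ ν ν' ∧ ∃ ρ : Ω → ENNReal, Antitone ρ ∧ ν'.rnDeriv μ =ᵐ[μ] ρ

open scoped ENNReal

section Aux
variable {α : Type*} [MeasurableSpace α]

lemma aux_layer (μ : Measure α) (g : α → ℝ≥0∞) (hg : Measurable g)
    (hfin : ∀ᵐ x ∂μ, g x ≠ ⊤) :
    ∫⁻ x, g x ∂μ = ∫⁻ t in Set.Ioi (0:ℝ), μ {x | ENNReal.ofReal t < g x} := by
  have h1 : ∫⁻ x, g x ∂μ = ∫⁻ x, ENNReal.ofReal ((g x).toReal) ∂μ :=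
    lintegral_congr_ae (hfin.mono fun x hx => (ENNReal.ofReal_toReal hx).symm)
  rw [h1, lintegral_eq_lintegral_meas_lt μ (Filter.Eventually.of_forall fun x => ENNReal.toReal_nonneg)
    hg.ennreal_toReal.aemeasurable]
  refine setLIntegral_congr_fun measurableSet_Ioi (fun t ht => ?_)
  refine measure_congr (hfin.mono fun x hx => ?_)
  have : (t < (g x).toReal) = (ENNReal.ofReal t < g x) := by
    rw [eq_iff_iff, ENNReal.ofReal_lt_iff_lt_toReal (le_of_lt ht) hx]
  exact this

lemma aux_quantile (μ : Measure α) (f : α → ℝ≥0∞) (u : ℝ≥0∞) :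
    μ {y | sInf {v : ℝ≥0∞ | μ {y | v < f y} ≤ u} < f y} ≤ u := by
  set S : Set ℝ≥0∞ := {v : ℝ≥0∞ | μ {y | v < f y} ≤ u} with hS
  have htopS : (⊤:ℝ≥0∞) ∈ S := by
    have : {y | (⊤:ℝ≥0∞) < f y} = ∅ := by
      ext y; simp
    simp [hS, this]
  set s₀ := sInf S with hs₀
  by_cases hs : s₀ ∈ S
  · exact hs
  · have hlt : s₀ ≠ ⊤ := fun h => hs (by rw [h]; exact htopS)
    have hex : ∀ n : ℕ, s₀ + ((n:ℝ≥0∞)+1)⁻¹ ∈ S := by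
      intro n
      have h1 : s₀ < s₀ + ((n:ℝ≥0∞)+1)⁻¹ :=
        ENNReal.lt_add_right hlt (by simp)
      obtain ⟨v, hvS, hvlt⟩ := sInf_lt_iff.mp h1
      exact le_trans (measure_mono fun y hy => lt_of_le_of_lt (le_of_lt hvlt) hy) hvS
    have hcover : {y | s₀ < f y} ⊆ ⋃ n : ℕ, {y | s₀ + ((n:ℝ≥0∞)+1)⁻¹ < f y} := by
      intro y hy
      simp only [Set.mem_setOf_eq] at hy
      rcases eq_or_ne (f y) ⊤ with htop | hne
      · refine Set.mem_iUnion.mpr ⟨0, ?_⟩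
        simp only [Set.mem_setOf_eq, htop]
        exact lt_top_iff_ne_top.mpr (ENNReal.add_ne_top.mpr ⟨hlt, by simp⟩)
      · have hd : (0:ℝ≥0∞) < f y - s₀ := tsub_pos_iff_lt.mpr hy
        obtain ⟨n, hn⟩ := ENNReal.exists_inv_nat_lt hd.ne'
        refine Set.mem_iUnion.mpr ⟨n, ?_⟩
        simp only [Set.mem_setOf_eq]
        have h2 : ((n:ℝ≥0∞)+1)⁻¹ ≤ (n:ℝ≥0∞)⁻¹ :=
          ENNReal.inv_le_inv.mpr (le_add_of_nonneg_right zero_le_one)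
        calc s₀ + ((n:ℝ≥0∞)+1)⁻¹ ≤ s₀ + (n:ℝ≥0∞)⁻¹ := add_le_add_right h2 _
          _ < s₀ + (f y - s₀) := ENNReal.add_lt_add_left hlt hn
          _ = f y := add_tsub_cancel_of_le (le_of_lt hy)
    have hmono : Monotone (fun n : ℕ => {y | s₀ + ((n:ℝ≥0∞)+1)⁻¹ < f y}) := by
      intro n m hnm y hy
      simp only [Set.mem_setOf_eq] at *
      refine lt_of_le_of_lt (add_le_add_right (ENNReal.inv_le_inv.mpr ?_) _) hy
      exact add_le_add_left (by exact_mod_cast hnm) 1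
    calc μ {y | s₀ < f y} ≤ μ (⋃ n : ℕ, {y | s₀ + ((n:ℝ≥0∞)+1)⁻¹ < f y}) :=
          measure_mono hcover
      _ = ⨆ n : ℕ, μ {y | s₀ + ((n:ℝ≥0∞)+1)⁻¹ < f y} := hmono.measure_iUnion
      _ ≤ u := iSup_le fun n => hex n

lemma aux_bathtub (μ ν : Measure α) [IsFiniteMeasure μ]
    {A B : Set α} (hA : MeasurableSet A) (hB : MeasurableSet B)
    (hAB : μ A = μ B) (c : ℝ≥0∞)
    (h1 : ν (B \ A) ≤ c * μ (B \ A)) (h2 : c * μ (A \ B) ≤ ν (A \ B)) :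
    ν B ≤ ν A := by
  have hdiff : μ (B \ A) = μ (A \ B) := by
    have e1 : μ (B ∩ A) + μ (B \ A) = μ B := measure_inter_add_diff B hA
    have e2 : μ (A ∩ B) + μ (A \ B) = μ A := measure_inter_add_diff A hB
    rw [Set.inter_comm] at e2
    have h3 : μ (B ∩ A) + μ (B \ A) = μ (B ∩ A) + μ (A \ B) := by
      rw [e1, e2, hAB]
    exact (ENNReal.add_right_inj (measure_ne_top μ _)).mp h3
  calc ν B = ν (B ∩ A) + ν (B \ A) := (measure_inter_add_diff B hA).symm
    _ ≤ ν (B ∩ A) + c * μ (B \ A) := add_le_add_right h1 _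
    _ = ν (A ∩ B) + c * μ (A \ B) := by rw [Set.inter_comm, hdiff]
    _ ≤ ν (A ∩ B) + ν (A \ B) := add_le_add_right h2 _
    _ = ν A := measure_inter_add_diff A hB

end Aux

theorem stmt0
    (P : Measure (Θ × Θ)) [IsProbabilityMeasure P]
    (𝒬 : Set (Measure (Θ × Θ)))
    (h𝒬 : ∀ Q ∈ 𝒬, IsProbabilityMeasure Q ∧ Q ≪ P)
    -- rearrangement invariance of 𝒬
    (hinv : ∀ Q ∈ 𝒬, ∀ Q' : Measure (Θ × Θ), IsProbabilityMeasure Q' → Q' ≪ P →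
      IsRearrangement P Q Q' → Q' ∈ 𝒬)
    (t₁ t₂ : Θ × Θ → ℝ)
    (ht₁m : Measurable t₁) (ht₂m : Measurable t₂)
    (ht₁0 : ∀ x, 0 ≤ t₁ x) (ht₂0 : ∀ x, 0 ≤ t₂ x)
    (hbdd : ∃ M : ℝ, ∀ x, t₁ x ≤ M ∧ t₂ x ≤ M)
    (T : Θ × Θ → ℝ)
    (hT : ∀ θ θ' : Θ, T (θ, θ') = t₁ (θ, θ') + t₂ (θ', θ))
    -- total transfer is nondecreasing in each argument
    (hTmono : Monotone T)
    -- the distribution of the total transfer under P is atomless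
    (hatomless : ∀ c : ℝ, 0 ≤ c → P {x | T x = c} = 0) :
    (⨅ Q ∈ 𝒬, ∫⁻ x, ENNReal.ofReal (T x) ∂Q)
      = ⨅ Q ∈ {Q' | Q' ∈ 𝒬 ∧ ∃ Q₀ ∈ 𝒬, IsDecreasingRearrangement P Q₀ Q'},
          ∫⁻ x, ENNReal.ofReal (T x) ∂Q := by
  classical
  obtain ⟨M, hM⟩ := hbdd
  have hTeq : ∀ x : Θ × Θ, T x = t₁ x + t₂ (x.2, x.1) := by
    intro x
    have := hT x.1 x.2
    simpa using this
  have hTm : Measurable T := by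
    have hTe : T = fun x => t₁ x + t₂ (x.2, x.1) := funext hTeq
    rw [hTe]
    exact ht₁m.add (ht₂m.comp (measurable_snd.prodMk measurable_fst))
  have hT0 : ∀ x, 0 ≤ T x := fun x => by
    rw [hTeq]; exact add_nonneg (ht₁0 x) (ht₂0 _)
  have hTb : ∀ x, T x ≤ M + M := fun x => by
    rw [hTeq]; exact add_le_add (hM x).1 (hM _).2
  -- main construction
  have key : ∀ Q ∈ 𝒬, ∃ Q' : Measure (Θ × Θ), Q' ∈ 𝒬 ∧
      (∃ Q₀ ∈ 𝒬, IsDecreasingRearrangement P Q₀ Q') ∧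
      ∫⁻ x, ENNReal.ofReal (T x) ∂Q' ≤ ∫⁻ x, ENNReal.ofReal (T x) ∂Q := by
    intro Q hQ
    obtain ⟨hQprob, hQP⟩ := h𝒬 Q hQ
    haveI := hQprob
    set f : Θ × Θ → ℝ≥0∞ := Q.rnDeriv P with hfdef
    have hfm : Measurable f := Q.measurable_rnDeriv P
    set F : ℝ → ℝ≥0∞ := fun c => P {x | T x ≤ c} with hFdef
    have hFmono : Monotone F := fun a b hab => measure_mono (fun x hx => le_trans hx hab)
    set U : Θ × Θ → ℝ≥0∞ := fun x => F (T x) with hUdef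
    set lam : ℝ≥0∞ → ℝ≥0∞ := fun v => P {y | v < f y} with hlamdef
    have hlam_anti : Antitone lam := fun a b hab => measure_mono (fun y hy => lt_of_le_of_lt hab hy)
    set ρ : Θ × Θ → ℝ≥0∞ := fun x => sInf {v | lam v ≤ U x} with hρdef
    have hmem : ∀ x, lam (ρ x) ≤ U x := fun x => aux_quantile P f (U x)
    have hchar : ∀ (s : ℝ≥0∞) x, s < ρ x ↔ U x < lam s := by
      intro s x
      constructor
      · intro h
        by_contra hc
        push_neg at hc
        exact absurd (sInf_le hc : ρ x ≤ s) (not_le.mpr h)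
      · intro h
        by_contra hc
        push_neg at hc
        exact (not_le.mpr h) (le_trans (hlam_anti hc) (hmem x))
    have hset : ∀ s : ℝ≥0∞, {x | s < ρ x} = {x | U x < lam s} :=
      fun s => Set.ext fun x => hchar s x
    have hρanti : Antitone ρ := by
      intro x y hxy
      refine sInf_le_sInf fun v hv => ?_
      exact le_trans hv (hFmono (hTmono hxy))
    have hρm : Measurable ρ := by
      have hganti : Antitone (fun r : ℝ => sInf {v | lam v ≤ F r}) := by
        intro r r' hrr'
        exact sInf_le_sInf fun v hv => le_trans hv (hFmono hrr')
      exact hganti.measurable.comp hTm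
    -- uniform distribution of U
    have huniform : ∀ a : ℝ≥0∞, 0 < a → a ≤ 1 →
        ∃ c : ℝ, 0 ≤ c ∧ {x | U x < a} = {x | T x < c} ∧ P {x | T x < c} = a := by
      intro a ha0 ha1
      set Sr : Set ℝ := {t : ℝ | a ≤ F t} with hSrdef
      have hSrup : ∀ {t t' : ℝ}, t ∈ Sr → t ≤ t' → t' ∈ Sr :=
        fun ht htt' => le_trans ht (hFmono htt')
      have hne : (M + M) ∈ Sr := by
        have huniv : {x | T x ≤ M + M} = Set.univ := Set.eq_univ_of_forall fun x => hTb x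
        simp only [hSrdef, Set.mem_setOf_eq, hFdef, huniv, measure_univ]
        exact ha1
      have hpos : ∀ t ∈ Sr, (0:ℝ) ≤ t := by
        intro t ht
        by_contra hneg
        push_neg at hneg
        have hempty : {x | T x ≤ t} = ∅ := by
          ext x
          simp only [Set.mem_setOf_eq, Set.mem_empty_iff_false, iff_false, not_le]
          exact lt_of_lt_of_le hneg (hT0 x)
        have : a ≤ F t := ht
        rw [hFdef] at this
        simp only [hempty, measure_empty] at this
        exact absurd this (by simpa using ha0.ne')
      have hbddb : BddBelow Sr := ⟨0, fun t ht => hpos t ht⟩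
      set c := sInf Sr with hcdef
      have hc0 : 0 ≤ c := le_csInf ⟨_, hne⟩ hpos
      have hlt : ∀ t : ℝ, t < c → F t < a := by
        intro t htc
        by_contra hge
        push_neg at hge
        exact absurd (csInf_le hbddb hge) (not_le.mpr htc)
      have hFc_ge : a ≤ F c := by
        have hmemn : ∀ n : ℕ, c + 1/(n+1) ∈ Sr := by
          intro n
          have h1 : c < c + 1/(n+1) := lt_add_of_pos_right c (by positivity)
          obtain ⟨t, htS, htlt⟩ := exists_lt_of_csInf_lt ⟨_, hne⟩ h1
          exact hSrup htS (le_of_lt htlt)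
        have hint : {x | T x ≤ c} = ⋂ n : ℕ, {x | T x ≤ c + 1/(n+1)} := by
          ext x
          simp only [Set.mem_setOf_eq, Set.mem_iInter]
          constructor
          · intro h n
            have : (0:ℝ) < 1/(n+1) := by positivity
            linarith
          · intro h
            by_contra hcx
            push_neg at hcx
            obtain ⟨n, hn⟩ := exists_nat_one_div_lt (sub_pos.mpr hcx)
            exact absurd (h n) (by linarith)
        have hanti : Antitone (fun n : ℕ => {x | T x ≤ c + 1/(n+1)}) := by
          intro n m hnm x hx
          simp only [Set.mem_setOf_eq] at *
          have : (1:ℝ)/(m+1) ≤ 1/(n+1) := by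
            apply one_div_le_one_div_of_le (by positivity)
            exact_mod_cast add_le_add_left (Nat.cast_le.mpr hnm) 1
          linarith
        have := hanti.measure_iInter (μ := P)
          (fun n => (measurableSet_le hTm measurable_const).nullMeasurableSet)
          ⟨0, measure_ne_top _ _⟩
        calc a ≤ ⨅ n : ℕ, P {x | T x ≤ c + 1/(n+1)} := le_iInf fun n => hmemn n
          _ = P (⋂ n : ℕ, {x | T x ≤ c + 1/(n+1)}) := this.symm
          _ = F c := by rw [← hint]
      have hPlt_le : P {x | T x < c} ≤ a := by
        have hunion : {x | T x < c} = ⋃ n : ℕ, {x | T x ≤ c - 1/(n+1)} := by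
          ext x
          simp only [Set.mem_setOf_eq, Set.mem_iUnion]
          constructor
          · intro h
            obtain ⟨n, hn⟩ := exists_nat_one_div_lt (sub_pos.mpr h)
            exact ⟨n, by linarith⟩
          · rintro ⟨n, hn⟩
            have : (0:ℝ) < 1/(n+1) := by positivity
            linarith
        have hmono2 : Monotone (fun n : ℕ => {x | T x ≤ c - 1/(n+1)}) := by
          intro n m hnm x hx
          simp only [Set.mem_setOf_eq] at *
          have : (1:ℝ)/(m+1) ≤ 1/(n+1) := by
            apply one_div_le_one_div_of_le (by positivity)
            exact_mod_cast add_le_add_left (Nat.cast_le.mpr hnm) 1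
          linarith
        rw [hunion, hmono2.measure_iUnion]
        refine iSup_le fun n => ?_
        have : c - 1/(n+1) < c := by
          have : (0:ℝ) < 1/(n+1) := by positivity
          linarith
        exact le_of_lt (hlt _ this)
      have hatom := hatomless c hc0
      have hFc_le : F c ≤ P {x | T x < c} := by
        have hsub : {x | T x ≤ c} ⊆ {x | T x < c} ∪ {x | T x = c} := by
          intro x hx
          rcases lt_or_eq_of_le (show T x ≤ c from hx) with h | h
          · exact Or.inl h
          · exact Or.inr h
        calc F c ≤ P ({x | T x < c} ∪ {x | T x = c}) := measure_mono hsub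
          _ ≤ P {x | T x < c} + P {x | T x = c} := measure_union_le _ _
          _ = P {x | T x < c} := by rw [hatom, add_zero]
      have hPeq : P {x | T x < c} = a :=
        le_antisymm hPlt_le (le_trans hFc_ge hFc_le)
      have hseteq : {x | U x < a} = {x | T x < c} := by
        ext x
        simp only [Set.mem_setOf_eq, hUdef]
        constructor
        · intro h
          by_contra hge
          push_neg at hge
          exact absurd (le_trans hFc_ge (hFmono hge)) (not_le.mpr h)
        · exact fun h => hlt _ h
      exact ⟨c, hc0, hseteq, hPeq⟩
    -- survival functions agree
    have hsurv : ∀ s : ℝ≥0∞, P {x | s < ρ x} = P {y | s < f y} := by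
      intro s
      rw [hset s]
      rcases eq_or_ne (lam s) 0 with h0 | hpos
      · have hempty : {x | U x < lam s} = ∅ := by
          rw [h0]; ext x; simp
        rw [hempty, measure_empty]
        exact h0.symm
      · have ha1 : lam s ≤ 1 := prob_le_one
        obtain ⟨c, hc0, hsq, hPeq⟩ := huniform (lam s) (pos_iff_ne_zero.mpr hpos) ha1
        rw [hsq, hPeq]
    -- finiteness a.e.
    have hffin : ∀ᵐ y ∂P, f y ≠ ⊤ :=
      (Q.rnDeriv_lt_top P).mono fun y h => h.ne
    have hPftop : P {y | f y = ⊤} = 0 := by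
      have h := Q.rnDeriv_lt_top P
      rw [ae_iff] at h
      refine measure_mono_null (fun y hy => ?_) h
      simp only [Set.mem_setOf_eq, not_lt, top_le_iff]
      exact hy
    have hinf : (⨅ n : ℕ, lam n) = 0 := by
      have hint : (⋂ n : ℕ, {y | (n:ℝ≥0∞) < f y}) = {y | f y = ⊤} := by
        ext y
        simp only [Set.mem_iInter, Set.mem_setOf_eq]
        constructor
        · intro h
          by_contra hne
          obtain ⟨n, hn⟩ := ENNReal.exists_nat_gt hne
          exact absurd (h n) (not_lt.mpr (le_of_lt hn))
        · intro h n
          rw [h]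
          exact lt_top_iff_ne_top.mpr (ENNReal.natCast_ne_top n)
      have hanti : Antitone (fun n : ℕ => {y | (n:ℝ≥0∞) < f y}) := by
        intro n m hnm y hy
        simp only [Set.mem_setOf_eq] at *
        exact lt_of_le_of_lt (by exact_mod_cast hnm) hy
      have := hanti.measure_iInter (μ := P)
        (fun n => (measurableSet_lt measurable_const hfm).nullMeasurableSet)
        ⟨0, measure_ne_top _ _⟩
      rw [hint] at this
      rw [← this, hPftop]
    have hU0 : P {x | U x = 0} = 0 := by
      by_contra hP0
      obtain ⟨n, hn⟩ := ENNReal.exists_inv_nat_lt hP0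
      have hle1 : P {x | U x = 0} ≤ 1 := prob_le_one
      have hn1 : ((n:ℝ≥0∞))⁻¹ ≤ 1 := by
        rcases Nat.eq_zero_or_pos n with h0 | hpos'
        · exfalso
          rw [h0] at hn
          simp only [Nat.cast_zero, ENNReal.inv_zero] at hn
          exact absurd (lt_of_lt_of_le hn hle1) (by simp)
        · simp only [ENNReal.inv_le_one]
          exact_mod_cast hpos'
      have hninvpos : (0:ℝ≥0∞) < (n:ℝ≥0∞)⁻¹ := ENNReal.inv_pos.mpr (ENNReal.natCast_ne_top n)
      obtain ⟨c, _, hsq, hPeq⟩ := huniform ((n:ℝ≥0∞))⁻¹ hninvpos hn1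
      have hsub : {x | U x = 0} ⊆ {x | U x < (n:ℝ≥0∞)⁻¹} := by
        intro x hx
        simp only [Set.mem_setOf_eq] at *
        rw [hx]; exact hninvpos
      have : P {x | U x = 0} ≤ (n:ℝ≥0∞)⁻¹ := by
        refine le_trans (measure_mono hsub) ?_
        rw [hsq, hPeq]
      exact absurd (lt_of_lt_of_le hn this) (lt_irrefl _)
    have hρfin : ∀ᵐ x ∂P, ρ x ≠ ⊤ := by
      have hsub2 : {x | ρ x = ⊤} ⊆ {x | U x = 0} := by
        intro x hx
        simp only [Set.mem_setOf_eq] at *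
        by_contra hUx
        have hUpos : 0 < U x := pos_iff_ne_zero.mpr hUx
        have hexn : ∃ n : ℕ, lam n < U x := iInf_lt_iff.mp (by rw [hinf]; exact hUpos)
        obtain ⟨n, hn⟩ := hexn
        have : ρ x ≤ n := sInf_le (le_of_lt hn)
        exact absurd hx (ne_top_of_le_ne_top (ENNReal.natCast_ne_top n) this)
      rw [ae_iff]
      refine measure_mono_null (fun x hx => ?_) (measure_mono_null hsub2 hU0)
      simpa using hx
    -- mass equality
    have hmass : ∫⁻ x, ρ x ∂P = ∫⁻ y, f y ∂P := by
      rw [aux_layer P ρ hρm hρfin, aux_layer P f hfm hffin]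
      exact lintegral_congr fun t => hsurv _
    -- the rearranged measure
    set Q' : Measure (Θ × Θ) := P.withDensity ρ with hQ'def
    have hQ'P : Q' ≪ P := withDensity_absolutelyContinuous _ _
    have hQ'univ : Q' Set.univ = 1 := by
      rw [hQ'def, withDensity_apply _ MeasurableSet.univ, setLIntegral_univ, hmass]
      have : ∫⁻ y, f y ∂P = (P.withDensity f) Set.univ := by
        rw [withDensity_apply _ MeasurableSet.univ, setLIntegral_univ]
      rw [this, hfdef, @Measure.withDensity_rnDeriv_eq _ _ Q P (@Measure.haveLebesgueDecomposition_of_finiteMeasure _ _ Q P (⟨by rw [hQprob.measure_univ]; exact ENNReal.one_lt_top⟩ : IsFiniteMeasure Q) inferInstance) hQP, measure_univ]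
    haveI hQ'prob : IsProbabilityMeasure Q' := ⟨hQ'univ⟩
    have hrn : Q'.rnDeriv P =ᵐ[P] ρ := Measure.rnDeriv_withDensity P hρm
    -- ≤ version of equality of distribution functions
    have hle_eq : ∀ cc : ℝ≥0∞, P {x | ρ x ≤ cc} = P {y | f y ≤ cc} := by
      intro cc
      have h1 : {x | ρ x ≤ cc} = {x | cc < ρ x}ᶜ := by
        ext x; simp [not_lt]
      have h2 : {y | f y ≤ cc} = {y | cc < f y}ᶜ := by
        ext y; simp [not_lt]
      rw [h1, h2, measure_compl (measurableSet_lt measurable_const hρm) (measure_ne_top _ _),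
        measure_compl (measurableSet_lt measurable_const hfm) (measure_ne_top _ _), hsurv]
    have hrearr : IsRearrangement P Q Q' := by
      intro cc
      have h1 : {ω | Q'.rnDeriv P ω ≤ cc} =ᵐ[P] {ω | ρ ω ≤ cc} :=
        hrn.mono fun ω hω => by
          change (Q'.rnDeriv P ω ≤ cc) = (ρ ω ≤ cc)
          rw [hω]
      rw [measure_congr h1]
      exact hle_eq cc
    have hdec : IsDecreasingRearrangement P Q Q' := ⟨hrearr, ρ, hρanti, hrn⟩
    have hQ'mem : Q' ∈ 𝒬 := hinv Q hQ Q' hQ'prob hQ'P hrearr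
    -- the integral inequality
    set w : Θ × Θ → ℝ≥0∞ := fun x => ENNReal.ofReal (T x) with hwdef
    have hwm : Measurable w := hTm.ennreal_ofReal
    set ν : Measure (Θ × Θ) := P.withDensity w with hνdef
    haveI : IsFiniteMeasure ν := by
      constructor
      rw [hνdef, withDensity_apply _ MeasurableSet.univ, setLIntegral_univ]
      calc ∫⁻ x, w x ∂P ≤ ∫⁻ _, ENNReal.ofReal (M+M) ∂P :=
            lintegral_mono fun x => ENNReal.ofReal_le_ofReal (hTb x)
        _ = ENNReal.ofReal (M+M) := by simp
        _ < ⊤ := ENNReal.ofReal_lt_top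
    have hνP : ν ≪ P := withDensity_absolutelyContinuous _ _
    have hρfinν : ∀ᵐ x ∂ν, ρ x ≠ ⊤ := hρfin.filter_mono hνP.ae_le
    have hffinν : ∀ᵐ x ∂ν, f x ≠ ⊤ := hffin.filter_mono hνP.ae_le
    have hlevel : ∀ s : ℝ≥0∞, ν {x | s < ρ x} ≤ ν {y | s < f y} := by
      intro s
      rw [hset s]
      rcases eq_or_ne (lam s) 0 with h0 | hpos
      · have hempty : {x | U x < lam s} = ∅ := by
          rw [h0]; ext x; simp
        rw [hempty]; simp
      · obtain ⟨c, hc0, hsq, hPeq⟩ :=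
          huniform (lam s) (pos_iff_ne_zero.mpr hpos) prob_le_one
        rw [hsq]
        have hAmeas : MeasurableSet {y | s < f y} := measurableSet_lt measurable_const hfm
        have hBmeas : MeasurableSet {x | T x < c} := measurableSet_lt hTm measurable_const
        have hABm : P {y | s < f y} = P {x | T x < c} := by rw [hPeq]
        have h1 : ν ({x | T x < c} \ {y | s < f y})
            ≤ ENNReal.ofReal c * P ({x | T x < c} \ {y | s < f y}) := by
          rw [hνdef, withDensity_apply _ (hBmeas.diff hAmeas)]
          calc ∫⁻ x in {x | T x < c} \ {y | s < f y}, w x ∂P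
              ≤ ∫⁻ _ in {x | T x < c} \ {y | s < f y}, ENNReal.ofReal c ∂P :=
                setLIntegral_mono measurable_const fun x hx =>
                  ENNReal.ofReal_le_ofReal (le_of_lt hx.1)
            _ = ENNReal.ofReal c * P ({x | T x < c} \ {y | s < f y}) :=
                setLIntegral_const _ _
        have h2 : ENNReal.ofReal c * P ({y | s < f y} \ {x | T x < c})
            ≤ ν ({y | s < f y} \ {x | T x < c}) := by
          rw [hνdef, withDensity_apply _ (hAmeas.diff hBmeas), ← setLIntegral_const]
          exact setLIntegral_mono hwm fun x hx =>
            ENNReal.ofReal_le_ofReal (not_lt.mp hx.2)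
        exact aux_bathtub P ν hAmeas hBmeas hABm (ENNReal.ofReal c) h1 h2
    have hineq : ∫⁻ x, ENNReal.ofReal (T x) ∂Q' ≤ ∫⁻ x, ENNReal.ofReal (T x) ∂Q := by
      have e1 : ∫⁻ x, ENNReal.ofReal (T x) ∂Q' = ∫⁻ x, ρ x ∂ν := by
        rw [hQ'def, lintegral_withDensity_eq_lintegral_mul _ hρm hwm,
          hνdef, lintegral_withDensity_eq_lintegral_mul _ hwm hρm]
        exact lintegral_congr fun x => mul_comm _ _
      have e2 : ∫⁻ x, ENNReal.ofReal (T x) ∂Q = ∫⁻ x, f x ∂ν := by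
        conv_lhs => rw [← @Measure.withDensity_rnDeriv_eq _ _ Q P (@Measure.haveLebesgueDecomposition_of_finiteMeasure _ _ Q P (⟨by rw [hQprob.measure_univ]; exact ENNReal.one_lt_top⟩ : IsFiniteMeasure Q) inferInstance) hQP]
        rw [lintegral_withDensity_eq_lintegral_mul _ (Q.measurable_rnDeriv P) hwm,
          hνdef, lintegral_withDensity_eq_lintegral_mul _ hwm hfm]
        exact lintegral_congr fun x => mul_comm _ _
      rw [e1, e2, aux_layer ν ρ hρm hρfinν, aux_layer ν f hfm hffinν]
      exact lintegral_mono fun t => hlevel _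
    exact ⟨Q', hQ'mem, ⟨Q, hQ, hdec⟩, hineq⟩
  refine le_antisymm ?_ ?_
  · exact le_iInf fun Q => le_iInf fun hQ => iInf₂_le Q hQ.1
  · refine le_iInf fun Q => le_iInf fun hQ => ?_
    obtain ⟨Q', hmem, hdr, hle⟩ := key Q hQ
    exact le_trans (iInf₂_le Q' ⟨hmem, hdr⟩) hle

end
end

section
/- Let μ be a probability measure on [0,1] and P = μ ⊗ μ the IID product on Θ² = [0,1]×[0,1]. Let 𝒬 be a set of IID probability measures on Θ² (each of the form Q₁ ⊗ Q₁ with Q₁ absolutely continuous with respect to μ) such that whenever Q ∈ 𝒬 and Q' is an IID probability measure absolutely continuous with respect to P that is a rearrangement of Q with respect to P, then Q' ∈ 𝒬. Let 𝒬* := {Q* ∈ 𝒬 : Q* is a decreasing rearrangement (with respect to P) of some Q ∈ 𝒬}. Let t = (t₁,t₂) : Θ² → ℝ₊² be a bounded measurable transfer function whose total transfer T(θ,θ') := t₁(θ,θ') + t₂(θ',θ) is nondecreasing in each argument and satisfies P{(θ,θ') : T(θ,θ') = c} = 0 for every c ≥ 0. Then inf_{Q ∈ 𝒬} ∬_{Θ²}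 T dQ = inf_{Q* ∈ 𝒬*} ∬_{Θ²} T dQ*. -/
open MeasureTheory

noncomputable section

/-- `Q` is an IID probability measure on `Θ × Θ` whose common marginal is
absolutely continuous with respect to `μ`. -/
def IsIID (μ : Measure Θ) (Q : Measure (Θ × Θ)) : Prop :=
  ∃ Q₁ : Measure Θ, IsProbabilityMeasure Q₁ ∧ Q₁ ≪ μ ∧ Q = Q₁.prod Q₁

namespace Stmt1Aux
open Set

instance : Fact ((0:ℝ) ≤ 1) := ⟨zero_le_one⟩

/-- layer cake for `ℝ≥0∞`-valued functions. -/
lemma layercake {α : Type*} [MeasurableSpace α] (ν : Measure α) [SFinite ν]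
    {g : α → ENNReal} (hg : Measurable g) :
    ∫⁻ x, g x ∂ν = ∫⁻ t in Ioi (0:ℝ), ν {x | ENNReal.ofReal t < g x} := by
  have mset : ∀ x, MeasurableSet {t : ℝ | ENNReal.ofReal t < g x} := fun x =>
    measurableSet_lt ENNReal.measurable_ofReal measurable_const
  have key : ∀ x, g x = ∫⁻ t in Ioi (0:ℝ), Set.indicator {t : ℝ | ENNReal.ofReal t < g x}
      (1 : ℝ → ENNReal) t := by
    intro x
    rw [lintegral_indicator_one (mset x), Measure.restrict_apply (mset x)]
    rcases eq_or_ne (g x) ⊤ with h | h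
    · have h2 : {t : ℝ | ENNReal.ofReal t < g x} ∩ Ioi 0 = Ioi 0 := by
        ext t; simp [h]
      rw [h2, Real.volume_Ioi, h]
    · have h2 : {t : ℝ | ENNReal.ofReal t < g x} ∩ Ioi 0 = Ioo 0 (g x).toReal := by
        ext t
        simp only [mem_inter_iff, mem_setOf_eq, mem_Ioi, mem_Ioo]
        constructor
        · rintro ⟨h1, h2⟩
          exact ⟨h2, (ENNReal.ofReal_lt_iff_lt_toReal h2.le h).mp h1⟩
        · rintro ⟨h1, h2⟩
          exact ⟨(ENNReal.ofReal_lt_iff_lt_toReal h1.le h).mpr h2, h1⟩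
      rw [h2, Real.volume_Ioo, sub_zero, ENNReal.ofReal_toReal h]
  calc ∫⁻ x, g x ∂ν
      = ∫⁻ x, (∫⁻ t in Ioi (0:ℝ), Set.indicator {t : ℝ | ENNReal.ofReal t < g x}
          (1 : ℝ → ENNReal) t ∂(volume : Measure ℝ)) ∂ν := lintegral_congr key
    _ = ∫⁻ t in Ioi (0:ℝ), (∫⁻ x, Set.indicator {t : ℝ | ENNReal.ofReal t < g x}
          (1 : ℝ → ENNReal) t ∂ν) ∂(volume : Measure ℝ) := by
        apply lintegral_lintegral_swap
        apply Measurable.aemeasurable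
        have hms : MeasurableSet {p : α × ℝ | ENNReal.ofReal p.2 < g p.1} :=
          measurableSet_lt (ENNReal.measurable_ofReal.comp measurable_snd)
            (hg.comp measurable_fst)
        have hmi : Measurable fun p : α × ℝ =>
            Set.indicator {p : α × ℝ | ENNReal.ofReal p.2 < g p.1}
            (1 : α × ℝ → ENNReal) p := measurable_one.indicator hms
        convert hmi using 2 with p
        rfl
    _ = ∫⁻ t in Ioi (0:ℝ), ν {x | ENNReal.ofReal t < g x} := by
        apply lintegral_congr
        intro t
        have ms : MeasurableSet {x | ENNReal.ofReal t < g x} :=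
          measurableSet_lt measurable_const hg
        rw [← lintegral_indicator_one ms]
        apply lintegral_congr
        intro x
        by_cases hx : ENNReal.ofReal t < g x <;> simp [Set.indicator, hx]

/-- In a linear order, two lower sets are nested. -/
lemma IsLowerSet.subset_or_subset' {α : Type*} [LinearOrder α] {L₁ L₂ : Set α}
    (h₁ : IsLowerSet L₁) (h₂ : IsLowerSet L₂) : L₁ ⊆ L₂ ∨ L₂ ⊆ L₁ := by
  by_contra h
  push_neg at h
  obtain ⟨h1, h2⟩ := h
  obtain ⟨x, hx1, hx2⟩ := Set.not_subset.mp h1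
  obtain ⟨y, hy2, hy1⟩ := Set.not_subset.mp h2
  rcases le_total x y with hxy | hyx
  · exact hx2 (h₂ hxy hy2)
  · exact hy1 (h₁ hyx hx1)

/-- A lower set of `Θ` is `Iio b` or `Iic b` for `b = sSup L`. -/
lemma isLowerSet_eq_Iio_or_Iic {L : Set Θ} (h : IsLowerSet L) :
    L = Iio (sSup L) ∨ L = Iic (sSup L) := by
  by_cases hb : sSup L ∈ L
  · right
    apply Set.Subset.antisymm (fun x hx => le_sSup hx) (fun x hx => h hx hb)
  · left
    apply Set.Subset.antisymm
    · intro x hx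
      exact lt_of_le_of_ne (le_sSup hx) (fun hxe => hb (hxe ▸ hx))
    · intro x hx
      by_contra hxL
      have : L ⊆ Iic x := by
        intro y hy
        by_contra hyx
        exact hxL (h (le_of_lt (not_le.mp hyx)) hy)
      exact absurd (sSup_le this) (not_le.mpr hx)

lemma measurableSet_Iic' (b : Θ) : MeasurableSet (Iic b) := measurableSet_Iic

lemma lowerSet_measurableSet {L : Set Θ} (h : IsLowerSet L) : MeasurableSet L := by
  rcases isLowerSet_eq_Iio_or_Iic h with h' | h' <;> rw [h']
  · exact measurableSet_Iio
  · exact measurableSet_Iic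

lemma upperSet_measurableSet {U : Set Θ} (h : IsUpperSet U) : MeasurableSet U := by
  rw [← compl_compl U]
  exact (lowerSet_measurableSet h.compl).compl

/-- A function into `ℝ≥0∞` whose strict superlevel sets are measurable is measurable. -/
lemma measurable_of_Ioi' {α : Type*} [MeasurableSpace α] {g : α → ENNReal}
    (h : ∀ c, MeasurableSet {x | c < g x}) : Measurable g := by
  have hg : @Measurable α ENNReal _ (MeasurableSpace.generateFrom (Set.range Set.Ioi)) g := by
    apply measurable_generateFrom
    rintro s ⟨c, rfl⟩
    exact h c
  exact hg.mono le_rfl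
    (le_of_eq (BorelSpace.measurable_eq.trans (borel_eq_generateFrom_Ioi ENNReal)))


section Rearr

variable (μ : Measure Θ) (f : Θ → ENNReal)

/-- cdf-like function. -/
def Fc (θ : Θ) : ENNReal := μ (Iic θ)

/-- survival function of `f` under `μ`. -/
def surv (c : ENNReal) : ENNReal := μ {θ | c < f θ}

/-- decreasing rearrangement of `f` with respect to `μ`. -/
def rear (θ : Θ) : ENNReal := sInf {c | surv μ f c ≤ Fc μ θ}

lemma Fc_mono : Monotone (Fc μ) := fun _ _ h => measure_mono (Iic_subset_Iic.mpr h)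

lemma surv_anti : Antitone (surv μ f) := fun _ _ h =>
  measure_mono (fun θ (hθ : _ < f θ) => lt_of_le_of_lt h hθ)

lemma surv_le_univ (c : ENNReal) : surv μ f c ≤ μ univ := measure_mono (subset_univ _)

/-- the defining set of `rear` contains its infimum. -/
lemma surv_sInf_le (m : ENNReal) : surv μ f (sInf {c | surv μ f c ≤ m}) ≤ m := by
  set S := {c | surv μ f c ≤ m} with hS
  set i := sInf S with hi
  rcases eq_or_ne i ⊤ with h | h
  · have : {θ | i < f θ} = ∅ := by
      ext θ; simp [h]
    simp only [surv, this, measure_empty]; exact zero_le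
  · have hU : {θ | i < f θ} = ⋃ n : ℕ, {θ | i + ((n : ENNReal))⁻¹ < f θ} := by
      ext θ
      simp only [mem_setOf_eq, mem_iUnion]
      constructor
      · intro hθ
        obtain ⟨r, hr0, hr⟩ := ENNReal.lt_iff_exists_add_pos_lt.mp hθ
        obtain ⟨n, hn⟩ := ENNReal.exists_inv_nat_lt (by exact_mod_cast hr0.ne' : (r : ENNReal) ≠ 0)
        refine ⟨n, ?_⟩
        calc i + ((n : ENNReal))⁻¹ ≤ i + (r : ENNReal) := add_le_add_right hn.le i
          _ < f θ := hr
      · rintro ⟨n, hn⟩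
        exact lt_of_le_of_lt (le_add_right le_rfl) hn
    have hmono : Monotone fun n : ℕ => {θ | i + ((n : ENNReal))⁻¹ < f θ} := by
      intro a b hab θ hθ
      exact lt_of_le_of_lt (add_le_add_right (ENNReal.inv_le_inv.mpr (by exact_mod_cast hab)) i) hθ
    have : surv μ f i = ⨆ n : ℕ, μ {θ | i + ((n : ENNReal))⁻¹ < f θ} := by
      rw [surv, hU, Monotone.measure_iUnion hmono]
    rw [this]
    apply iSup_le
    intro n
    rcases eq_or_ne (n : ENNReal)⁻¹ 0 with h0 | h0
    · rw [h0, add_zero]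
      -- i + 0 = i; but here we can't conclude directly; handle via n = 0 impossible
      -- (n : ENNReal)⁻¹ = 0 ↔ n = ⊤, impossible for nat cast; so this case is vacuous
      exact absurd h0 (by simp)
    · have hlt : i < i + ((n : ENNReal))⁻¹ :=
        ENNReal.lt_add_right h (by simpa using h0)
      obtain ⟨c, hcS, hci⟩ := sInf_lt_iff.mp (lt_of_le_of_lt (le_refl i) hlt)
      calc μ {θ | i + ((n : ENNReal))⁻¹ < f θ} ≤ surv μ f c :=
            measure_mono (fun θ hθ => lt_of_le_of_lt hci.le hθ)
        _ ≤ m := hcS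

lemma rear_lt_iff (θ : Θ) (c : ENNReal) :
    c < rear μ f θ ↔ Fc μ θ < surv μ f c := by
  constructor
  · intro h
    by_contra hc
    have hmem : c ∈ {c | surv μ f c ≤ Fc μ θ} := not_lt.mp hc
    exact absurd (sInf_le hmem) (not_le.mpr h)
  · intro h
    by_contra hc
    have hmem : rear μ f θ ∈ {c | surv μ f c ≤ Fc μ θ} := surv_sInf_le μ f (Fc μ θ)
    have : surv μ f c ≤ Fc μ θ := le_trans (surv_anti μ f (not_lt.mp hc)) hmem
    exact absurd this (not_le.mpr h)

lemma rear_anti : Antitone (rear μ f) := by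
  intro θ θ' h
  exact sInf_le_sInf (fun c hc => le_trans hc (Fc_mono μ h))

lemma lowerSet_rear_gt (c : ENNReal) : IsLowerSet {θ | c < rear μ f θ} := by
  intro a b hba ha
  simp only [mem_setOf_eq, rear_lt_iff] at ha ⊢
  exact lt_of_le_of_lt (Fc_mono μ hba) ha

lemma rear_measurable : Measurable (rear μ f) :=
  measurable_of_Ioi' fun c => lowerSet_measurableSet (lowerSet_rear_gt μ f c)

section IVT

variable [IsProbabilityMeasure μ]

lemma Fc_bot (ha : ∀ a : Θ, μ {a} = 0) : Fc μ ⊥ = 0 := by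
  have : Iic (⊥:Θ) = {⊥} := by
    ext x; simp [le_bot_iff]
  rw [Fc, this, ha]

/-- intermediate value property of the cdf of an atomless probability measure. -/
lemma meas_Fc_lt (ha : ∀ a : Θ, μ {a} = 0) {m : ENNReal} (hm : m ≤ 1) :
    μ {θ | Fc μ θ < m} = m := by
  rcases eq_or_ne m 0 with rfl | hm0
  · have : {θ | Fc μ θ < 0} = ∅ := by
      ext θ; simp
    simp [this]
  set A := {θ | Fc μ θ < m} with hA
  have hAl : IsLowerSet A := fun a b hba haA =>
    lt_of_le_of_lt (Fc_mono μ hba) haA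
  have h0A : (⊥:Θ) ∈ A := by
    simp only [hA, mem_setOf_eq, Fc_bot μ ha]
    exact pos_iff_ne_zero.mpr hm0
  set b := sSup A with hb
  have hIioA : Iio b ⊆ A := by
    intro x hx
    by_contra hxA
    have : A ⊆ Iic x := fun y hy => by
      by_contra hyx
      exact hxA (hAl (not_le.mp hyx).le hy)
    exact absurd (sSup_le this) (not_le.mpr hx)
  have hAIic : A ⊆ Iic b := fun x hx => le_sSup hx
  have hIioIic : μ (Iio b) = μ (Iic b) := by
    have : Iic b = Iio b ∪ {b} := by
      ext x
      simp only [mem_Iic, mem_union, mem_Iio, mem_singleton_iff]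
      constructor
      · intro h; rcases lt_or_eq_of_le h with h | h
        · exact Or.inl h
        · exact Or.inr h
      · rintro (h | rfl); exacts [h.le, le_rfl]
    rw [this]
    refine le_antisymm (measure_mono subset_union_left) ?_
    calc μ (Iio b ∪ {b}) ≤ μ (Iio b) + μ {b} := measure_union_le _ _
      _ = μ (Iio b) := by rw [ha b, add_zero]
  have hμA : μ A = Fc μ b := by
    refine le_antisymm ?_ ?_
    · calc μ A ≤ μ (Iic b) := measure_mono hAIic
        _ = Fc μ b := rfl
    · calc Fc μ b = μ (Iio b) := hIioIic.symm
        _ ≤ μ A := measure_mono hIioA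
  -- show Fc μ b = m
  have hFb_ge : m ≤ Fc μ b := by
    rcases eq_or_ne b ⊤ with htop | hbt
    · have huniv : Iic (⊤:Θ) = univ := by ext x; simp
      rw [htop]
      show m ≤ μ (Iic (⊤:Θ))
      rw [huniv, measure_univ]; exact hm
    · by_contra hlt
      push_neg at hlt
      -- b < ⊤, take θₙ ↓ b with θₙ > b
      have hbv1 : (b : ℝ) < 1 := by
        rcases lt_or_eq_of_le b.2.2 with h | h
        · exact h
        · exact absurd (Subtype.ext h : b = (⊤:Θ)) hbt
      set θs : ℕ → Θ := fun n => ⟨min 1 ((b:ℝ) + 1/(n+1)), by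
        constructor
        · exact le_min zero_le_one (add_nonneg b.2.1 (by positivity))
        · exact min_le_left _ _⟩ with hθs
      have hθgt : ∀ n, b < θs n := by
        intro n
        have hv : (b:ℝ) < min 1 ((b:ℝ) + 1/(n+1)) :=
          lt_min hbv1 (by linarith [one_div_pos.mpr (by positivity : (0:ℝ) < (n:ℝ)+1)])
        exact Subtype.coe_lt_coe.mp hv
      have hanti : Antitone fun n : ℕ => Iic (θs n) := by
        intro a c hac
        apply Iic_subset_Iic.mpr
        rw [← Subtype.coe_le_coe]
        apply min_le_min le_rfl
        have : 1/((c:ℝ)+1) ≤ 1/((a:ℝ)+1) := by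
          apply one_div_le_one_div_of_le (by positivity)
          exact_mod_cast add_le_add_left (Nat.cast_le.mpr hac) 1
        linarith
      have hiInter : (⋂ n, Iic (θs n)) = Iic b := by
        apply Subset.antisymm
        · intro x hx
          simp only [mem_iInter, mem_Iic] at hx
          have hxv : ∀ n : ℕ, (x:ℝ) ≤ (b:ℝ) + 1/(n+1) := by
            intro n
            exact le_trans (Subtype.coe_le_coe.mpr (hx n)) (min_le_right _ _)
          show x ≤ b
          rw [← Subtype.coe_le_coe]
          by_contra hgt
          push_neg at hgt
          obtain ⟨n, hn⟩ := exists_nat_one_div_lt (by linarith : (0:ℝ) < (x:ℝ) - (b:ℝ))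
          linarith [hxv n]
        · intro x hx
          simp only [mem_iInter, mem_Iic]
          exact fun n => le_of_lt (lt_of_le_of_lt hx (hθgt n))
      have hfix := Antitone.measure_iInter (μ := μ) hanti
        (fun n => (measurableSet_Iic).nullMeasurableSet)
        ⟨0, measure_ne_top μ _⟩
      rw [hiInter] at hfix
      have hex : ∃ n, Fc μ (θs n) < m := by
        by_contra hno
        push_neg at hno
        have hgood : m ≤ Fc μ b := by
          show m ≤ μ (Iic b)
          rw [hfix]
          exact le_iInf hno
        exact absurd hgood (not_le.mpr hlt)
      obtain ⟨n, hn⟩ := hex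
      have : θs n ∈ A := hn
      exact absurd (le_sSup this) (not_le.mpr (hθgt n))
  have hFb_le : Fc μ b ≤ m := by
    have hbbot : ⊥ < b := by
      rcases eq_or_ne b ⊥ with hbot | h
      · exfalso
        have hge : m ≤ Fc μ ⊥ := hbot ▸ hFb_ge
        rw [Fc_bot μ ha] at hge
        exact hm0 (le_antisymm hge zero_le)
      · exact lt_of_le_of_ne bot_le (Ne.symm h)
    have hbv0 : (0:ℝ) < (b : ℝ) := by
      rcases lt_or_eq_of_le b.2.1 with h | h
      · exact h
      · exact absurd (Subtype.ext h.symm : b = (⊥:Θ)) (ne_of_gt hbbot)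
    set θs : ℕ → Θ := fun n => ⟨max 0 ((b:ℝ) - 1/(n+1)), by
      constructor
      · exact le_max_left _ _
      · exact max_le (zero_le_one) (le_trans (sub_le_self _ (by positivity)) b.2.2)⟩ with hθs
    have hθlt : ∀ n, θs n < b := by
      intro n
      rw [← Subtype.coe_lt_coe]
      apply max_lt hbv0
      linarith [one_div_pos.mpr (by positivity : (0:ℝ) < (n:ℝ)+1)]
    have hmono : Monotone fun n : ℕ => Iic (θs n) := by
      intro a c hac
      apply Iic_subset_Iic.mpr
      rw [← Subtype.coe_le_coe]
      apply max_le_max le_rfl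
      have : 1/((c:ℝ)+1) ≤ 1/((a:ℝ)+1) := by
        apply one_div_le_one_div_of_le (by positivity)
        exact_mod_cast add_le_add_left (Nat.cast_le.mpr hac) 1
      linarith
    have hiUnion : (⋃ n, Iic (θs n)) = Iio b := by
      apply Subset.antisymm
      · apply iUnion_subset
        intro n x hx
        exact lt_of_le_of_lt hx (hθlt n)
      · intro x hx
        simp only [mem_iUnion, mem_Iic]
        obtain ⟨n, hn⟩ := exists_nat_one_div_lt
          (show (0:ℝ) < (b:ℝ) - (x:ℝ) from sub_pos.mpr hx)
        refine ⟨n, ?_⟩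
        rw [← Subtype.coe_le_coe]
        show (x:ℝ) ≤ max 0 ((b:ℝ) - 1/(n+1))
        have : (x:ℝ) ≤ (b:ℝ) - 1/(n+1) := by linarith
        exact le_trans this (le_max_right _ _)
    have hμIio : μ (Iio b) = ⨆ n, Fc μ (θs n) := by
      rw [← hiUnion, Monotone.measure_iUnion hmono]
      rfl
    have hsub : ∀ n, θs n ∈ A := by
      intro n
      by_contra hnA
      have : A ⊆ Iic (θs n) := fun y hy => by
        by_contra hyx
        exact hnA (hAl (not_le.mp hyx).le hy)
      exact absurd (sSup_le this) (not_le.mpr (hθlt n))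
    calc Fc μ b = μ (Iio b) := hIioIic.symm
      _ = ⨆ n, Fc μ (θs n) := hμIio
      _ ≤ m := iSup_le fun n => le_of_lt (hsub n)
  rw [hμA, le_antisymm hFb_le hFb_ge]

/-- equimeasurability of the rearrangement. -/
lemma meas_rear_gt (ha : ∀ a : Θ, μ {a} = 0) (c : ENNReal) :
    μ {θ | c < rear μ f θ} = surv μ f c := by
  have : {θ | c < rear μ f θ} = {θ | Fc μ θ < surv μ f c} := by
    ext θ; exact rear_lt_iff μ f θ c
  rw [this]
  exact meas_Fc_lt μ ha (le_trans (surv_le_univ μ f c) (le_of_eq measure_univ))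

/-- one-dimensional Hardy–Littlewood-type domination at each level. -/
lemma dom_level (ha : ∀ a : Θ, μ {a} = 0) {V : Set Θ} (hV : IsUpperSet V)
    (c : ENNReal) :
    μ (V ∩ {θ | c < rear μ f θ}) ≤ μ (V ∩ {θ | c < f θ}) := by
  set L := {θ | c < rear μ f θ} with hL
  have hLl : IsLowerSet L := lowerSet_rear_gt μ f c
  have hμL : μ L = surv μ f c := meas_rear_gt μ f ha c
  rcases IsLowerSet.subset_or_subset' hLl hV.compl with h | h
  · have : V ∩ L = ∅ := by
      rw [Set.eq_empty_iff_forall_notMem]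
      rintro x ⟨hxV, hxL⟩
      exact h hxL hxV
    rw [this]; simp
  · -- Vᶜ ⊆ L
    have hsplit : μ (L ∩ V) + μ (L \ V) = μ L :=
      measure_inter_add_diff L (upperSet_measurableSet hV)
    have hdiff : L \ V = Vᶜ := by
      apply Subset.antisymm (fun x hx => hx.2)
      intro x hx
      exact ⟨h hx, hx⟩
    rw [hdiff] at hsplit
    have hsurv : surv μ f c ≤ μ (V ∩ {θ | c < f θ}) + μ Vᶜ := by
      have h1 : μ {θ | c < f θ} = μ ({θ | c < f θ} ∩ V) + μ ({θ | c < f θ} \ V) :=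
        (measure_inter_add_diff _ (upperSet_measurableSet hV)).symm
      calc surv μ f c = μ ({θ | c < f θ} ∩ V) + μ ({θ | c < f θ} \ V) := h1
        _ ≤ μ (V ∩ {θ | c < f θ}) + μ Vᶜ := by
            apply add_le_add
            · rw [Set.inter_comm]
            · exact measure_mono (diff_subset_compl _ _)
    have hVfin : μ Vᶜ ≠ ⊤ := measure_ne_top μ _
    have hle : μ (L ∩ V) + μ Vᶜ ≤ μ (V ∩ {θ | c < f θ}) + μ Vᶜ := by
      rw [hsplit, hμL]; exact hsurv
    rw [Set.inter_comm]
    exact (ENNReal.add_le_add_iff_right hVfin).mp hle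

/-- stochastic dominance on upper sets gives comparison of integrals of
monotone functions. -/
lemma st_dom {α : Type*} [MeasurableSpace α] [Preorder α] {ν₁ ν₂ : Measure α}
    [SFinite ν₁] [SFinite ν₂]
    (h : ∀ V : Set α, IsUpperSet V → MeasurableSet V → ν₁ V ≤ ν₂ V)
    {g : α → ENNReal} (hg : Measurable g) (hmono : Monotone g) :
    ∫⁻ x, g x ∂ν₁ ≤ ∫⁻ x, g x ∂ν₂ := by
  rw [layercake ν₁ hg, layercake ν₂ hg]
  apply lintegral_mono
  intro t
  apply h
  · intro a b hab hb
    exact lt_of_lt_of_le hb (hmono hab)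
  · exact measurableSet_lt measurable_const hg

/-- the rearranged density measure is dominated on upper sets. -/
lemma rear_dom_upper (hf : Measurable f) (ha : ∀ a : Θ, μ {a} = 0)
    {V : Set Θ} (hV : IsUpperSet V) :
    (μ.withDensity (rear μ f)) V ≤ (μ.withDensity f) V := by
  rw [withDensity_apply _ (upperSet_measurableSet hV),
    withDensity_apply _ (upperSet_measurableSet hV)]
  rw [layercake (μ.restrict V) (rear_measurable μ f), layercake (μ.restrict V) hf]
  apply lintegral_mono
  intro t
  dsimp only
  rw [Measure.restrict_apply (measurableSet_lt measurable_const (rear_measurable μ f)),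
    Measure.restrict_apply (measurableSet_lt measurable_const hf)]
  rw [Set.inter_comm _ V, Set.inter_comm _ V]
  exact dom_level μ f ha hV (ENNReal.ofReal t)

end IVT

/-- product of two stochastically dominated measures dominates on upper sets. -/
lemma prod_dom {ν₁ ν₂ : Measure Θ} [IsProbabilityMeasure ν₁] [IsProbabilityMeasure ν₂]
    (h : ∀ V : Set Θ, IsUpperSet V → MeasurableSet V → ν₁ V ≤ ν₂ V)
    {U : Set (Θ × Θ)} (hU : IsUpperSet U) (hUm : MeasurableSet U) :
    (ν₁.prod ν₁) U ≤ (ν₂.prod ν₂) U := by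
  rw [Measure.prod_apply hUm, Measure.prod_apply hUm]
  have hsec_upper : ∀ θ : Θ, IsUpperSet (Prod.mk θ ⁻¹' U) := by
    intro θ a b hab ha
    exact hU (Prod.mk_le_mk.mpr ⟨le_rfl, hab⟩) ha
  have hsec_m : ∀ θ : Θ, MeasurableSet (Prod.mk θ ⁻¹' U) := fun θ =>
    measurable_prodMk_left hUm
  calc ∫⁻ θ, ν₁ (Prod.mk θ ⁻¹' U) ∂ν₁
      ≤ ∫⁻ θ, ν₂ (Prod.mk θ ⁻¹' U) ∂ν₁ :=
        lintegral_mono fun θ => h _ (hsec_upper θ) (hsec_m θ)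
    _ ≤ ∫⁻ θ, ν₂ (Prod.mk θ ⁻¹' U) ∂ν₂ := by
        apply st_dom h (measurable_measure_prodMk_left hUm)
        intro a b hab
        apply measure_mono
        intro x hx
        exact hU (Prod.mk_le_mk.mpr ⟨hab, le_rfl⟩) hx

/-- equality of distributions of `f` and its rearrangement. -/
lemma map_rear_eq_map [IsProbabilityMeasure μ] (hf : Measurable f)
    (ha : ∀ a : Θ, μ {a} = 0) :
    Measure.map (rear μ f) μ = Measure.map f μ := by
  have h1 : IsProbabilityMeasure (Measure.map (rear μ f) μ) :=
    Measure.isProbabilityMeasure_map (rear_measurable μ f).aemeasurable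
  have h2 : IsProbabilityMeasure (Measure.map f μ) :=
    Measure.isProbabilityMeasure_map hf.aemeasurable
  apply MeasureTheory.ext_of_generate_finite (Set.range Set.Ioi)
    (BorelSpace.measurable_eq.trans (borel_eq_generateFrom_Ioi ENNReal))
    isPiSystem_Ioi
  · rintro s ⟨c, rfl⟩
    rw [Measure.map_apply (rear_measurable μ f) measurableSet_Ioi,
      Measure.map_apply hf measurableSet_Ioi]
    have e1 : rear μ f ⁻¹' Ioi c = {θ | c < rear μ f θ} := rfl
    have e2 : f ⁻¹' Ioi c = {θ | c < f θ} := rfl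
    rw [e1, e2, meas_rear_gt μ f ha c]
    rfl
  · rw [h1.measure_univ, h2.measure_univ]

/-- product of `withDensity` measures. -/
lemma prod_withDensity_eq [SigmaFinite μ] {g₁ g₂ : Θ → ENNReal} (hg₁ : Measurable g₁)
    (hg₂ : Measurable g₂) [IsFiniteMeasure (μ.withDensity g₁)]
    [IsFiniteMeasure (μ.withDensity g₂)] :
    (μ.withDensity g₁).prod (μ.withDensity g₂)
      = (μ.prod μ).withDensity (fun x => g₁ x.1 * g₂ x.2) := by
  refine Measure.prod_eq fun s t hs ht => ?_
  rw [withDensity_apply _ (hs.prod ht), withDensity_apply _ hs, withDensity_apply _ ht,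
    ← Measure.prod_restrict, lintegral_prod_mul (hg₁.aemeasurable) (hg₂.aemeasurable)]

end Rearr
end Stmt1Aux



open Stmt1Aux in
theorem stmt1
    (μ : Measure Θ) [IsProbabilityMeasure μ]
    (P : Measure (Θ × Θ)) (hP : P = μ.prod μ)
    (𝒬 : Set (Measure (Θ × Θ)))
    -- every member of 𝒬 is IID with marginal absolutely continuous w.r.t. μ
    (h𝒬 : ∀ Q ∈ 𝒬, IsIID μ Q)
    -- rearrangement invariance of 𝒬 relative to the domain of IID beliefs
    (hinv : ∀ Q ∈ 𝒬, ∀ Q' : Measure (Θ × Θ), IsIID μ Q' → Q' ≪ P →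
      IsRearrangement P Q Q' → Q' ∈ 𝒬)
    (t₁ t₂ : Θ × Θ → ℝ)
    (ht₁m : Measurable t₁) (ht₂m : Measurable t₂)
    (ht₁0 : ∀ x, 0 ≤ t₁ x) (ht₂0 : ∀ x, 0 ≤ t₂ x)
    (hbdd : ∃ M : ℝ, ∀ x, t₁ x ≤ M ∧ t₂ x ≤ M)
    (T : Θ × Θ → ℝ)
    (hT : ∀ θ θ' : Θ, T (θ, θ') = t₁ (θ, θ') + t₂ (θ', θ))
    -- total transfer is nondecreasing in each argument
    (hTmono : Monotone T)
    -- the distribution of the total transfer under P is atomless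
    (hatomless : ∀ c : ℝ, 0 ≤ c → P {x | T x = c} = 0) :
    (⨅ Q ∈ 𝒬, ∫⁻ x, ENNReal.ofReal (T x) ∂Q)
      = ⨅ Q ∈ {Q' | Q' ∈ 𝒬 ∧ ∃ Q₀ ∈ 𝒬, IsDecreasingRearrangement P Q₀ Q'},
          ∫⁻ x, ENNReal.ofReal (T x) ∂Q := by
  subst hP
  -- μ is atomless
  have ha : ∀ a : Θ, μ {a} = 0 := by
    intro a
    by_contra h
    have hTa : (0:ℝ) ≤ T (a, a) := by
      rw [hT a a]; exact add_nonneg (ht₁0 _) (ht₂0 _)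
    have hsub : ({a} : Set Θ) ×ˢ ({a} : Set Θ) ⊆ {x | T x = T (a, a)} := by
      rintro ⟨x1, x2⟩ ⟨h1, h2⟩
      simp only [Set.mem_singleton_iff] at h1 h2
      subst h1; subst h2; rfl
    have h0 := measure_mono_null hsub (hatomless (T (a, a)) hTa)
    rw [Measure.prod_prod] at h0
    rcases mul_eq_zero.mp h0 with h' | h' <;> exact h h'
  -- measurability of T
  have hTeq : T = fun x : Θ × Θ => t₁ x + t₂ (x.2, x.1) := by
    funext x
    cases x with
    | mk a b => rw [hT a b]
  have hTm : Measurable T := by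
    rw [hTeq]
    exact ht₁m.add (ht₂m.comp (measurable_snd.prodMk measurable_fst))
  -- main construction
  have key : ∀ Q ∈ 𝒬, ∃ Q', Q' ∈ 𝒬 ∧
      (∃ Q₀ ∈ 𝒬, IsDecreasingRearrangement (μ.prod μ) Q₀ Q') ∧
      ∫⁻ x, ENNReal.ofReal (T x) ∂Q' ≤ ∫⁻ x, ENNReal.ofReal (T x) ∂Q := by
    intro Q hQ
    obtain ⟨Q₁, hQ₁prob, hQ₁ac, rfl⟩ := h𝒬 Q hQ
    haveI := hQ₁prob
    set f : Θ → ENNReal := Q₁.rnDeriv μ with hfdef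
    have hf : Measurable f := Measure.measurable_rnDeriv _ _
    have hQ₁eq : μ.withDensity f = Q₁ := Measure.withDensity_rnDeriv_eq _ _ hQ₁ac
    set g : Θ → ENNReal := rear μ f with hgdef
    have hg : Measurable g := rear_measurable μ f
    have hmap : Measure.map g μ = Measure.map f μ := map_rear_eq_map μ f hf ha
    have hint : ∫⁻ θ, g θ ∂μ = 1 := by
      have h1 : ∫⁻ θ, g θ ∂μ = ∫⁻ c, c ∂(Measure.map g μ) :=
        (lintegral_map measurable_id hg).symm
      have h2 : ∫⁻ θ, f θ ∂μ = ∫⁻ c, c ∂(Measure.map f μ) :=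
        (lintegral_map measurable_id hf).symm
      rw [h1, hmap, ← h2, Measure.lintegral_rnDeriv hQ₁ac]
      exact measure_univ
    haveI hQsprob : IsProbabilityMeasure (μ.withDensity g) := ⟨by
      rw [withDensity_apply _ MeasurableSet.univ, Measure.restrict_univ]
      exact hint⟩
    haveI hQfprob : IsProbabilityMeasure (μ.withDensity f) := by
      rw [hQ₁eq]; exact hQ₁prob
    set Q' := (μ.withDensity g).prod (μ.withDensity g) with hQ'def
    have hprod_f : Q₁.prod Q₁ = (μ.prod μ).withDensity (fun x => f x.1 * f x.2) := by
      rw [← hQ₁eq]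
      exact prod_withDensity_eq μ hf hf
    have hprod_g : Q' = (μ.prod μ).withDensity (fun x => g x.1 * g x.2) :=
      prod_withDensity_eq μ hg hg
    have hmulf : Measurable fun x : Θ × Θ => f x.1 * f x.2 :=
      (hf.comp measurable_fst).mul (hf.comp measurable_snd)
    have hmulg : Measurable fun x : Θ × Θ => g x.1 * g x.2 :=
      (hg.comp measurable_fst).mul (hg.comp measurable_snd)
    have hrnf : (Q₁.prod Q₁).rnDeriv (μ.prod μ) =ᵐ[μ.prod μ] fun x => f x.1 * f x.2 := by
      rw [hprod_f]
      exact Measure.rnDeriv_withDensity _ hmulf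
    have hrng : Q'.rnDeriv (μ.prod μ) =ᵐ[μ.prod μ] fun x => g x.1 * g x.2 := by
      rw [hprod_g]
      exact Measure.rnDeriv_withDensity _ hmulg
    -- equality of joint distributions of the densities
    have hmapprod : Measure.map (fun x : Θ × Θ => g x.1 * g x.2) (μ.prod μ)
        = Measure.map (fun x : Θ × Θ => f x.1 * f x.2) (μ.prod μ) := by
      have e : ∀ h : Θ → ENNReal, (fun x : Θ × Θ => h x.1 * h x.2)
          = (fun p : ENNReal × ENNReal => p.1 * p.2) ∘ Prod.map h h := by
        intro h; funext x; rfl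
      rw [e g, e f, ← Measure.map_map (g := fun p : ENNReal × ENNReal => p.1 * p.2) (measurable_fst.mul measurable_snd) (hg.prodMap hg),
        ← Measure.map_map (g := fun p : ENNReal × ENNReal => p.1 * p.2) (measurable_fst.mul measurable_snd) (hf.prodMap hf),
        ← Measure.map_prod_map _ _ hg hg, ← Measure.map_prod_map _ _ hf hf, hmap]
    have hre : IsRearrangement (μ.prod μ) (Q₁.prod Q₁) Q' := by
      intro c
      have e1 : (μ.prod μ) {ω | Q'.rnDeriv (μ.prod μ) ω ≤ c}
          = (μ.prod μ) {ω | g ω.1 * g ω.2 ≤ c} :=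
        measure_congr (Filter.eventuallyEq_set.mpr (hrng.mono fun ω hω => by
          simp only [Set.mem_setOf_eq, hω]))
      have e2 : (μ.prod μ) {ω | (Q₁.prod Q₁).rnDeriv (μ.prod μ) ω ≤ c}
          = (μ.prod μ) {ω | f ω.1 * f ω.2 ≤ c} :=
        measure_congr (Filter.eventuallyEq_set.mpr (hrnf.mono fun ω hω => by
          simp only [Set.mem_setOf_eq, hω]))
      have e3 : (μ.prod μ) {ω | g ω.1 * g ω.2 ≤ c}
          = (μ.prod μ) {ω | f ω.1 * f ω.2 ≤ c} := by
        have m1 : (μ.prod μ) {ω | g ω.1 * g ω.2 ≤ c}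
            = Measure.map (fun x : Θ × Θ => g x.1 * g x.2) (μ.prod μ) (Set.Iic c) := by
          rw [Measure.map_apply hmulg measurableSet_Iic]; rfl
        have m2 : (μ.prod μ) {ω | f ω.1 * f ω.2 ≤ c}
            = Measure.map (fun x : Θ × Θ => f x.1 * f x.2) (μ.prod μ) (Set.Iic c) := by
          rw [Measure.map_apply hmulf measurableSet_Iic]; rfl
        rw [m1, m2, hmapprod]
      rw [e1, e2, e3]
    have hIID : IsIID μ Q' :=
      ⟨μ.withDensity g, hQsprob, withDensity_absolutelyContinuous _ _, rfl⟩
    have hAC : Q' ≪ μ.prod μ := by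
      rw [hprod_g]
      exact withDensity_absolutelyContinuous _ _
    have hmem : Q' ∈ 𝒬 := hinv _ hQ _ hIID hAC hre
    have hanti : Antitone fun x : Θ × Θ => g x.1 * g x.2 := fun x y hxy =>
      mul_le_mul' (rear_anti μ f hxy.1) (rear_anti μ f hxy.2)
    have hdecr : IsDecreasingRearrangement (μ.prod μ) (Q₁.prod Q₁) Q' :=
      ⟨hre, fun x => g x.1 * g x.2, hanti, hrng⟩
    have hdom : ∀ U : Set (Θ × Θ), IsUpperSet U → MeasurableSet U →
        Q' U ≤ (Q₁.prod Q₁) U := by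
      intro U hU hUm
      have h1 : ∀ V : Set Θ, IsUpperSet V → MeasurableSet V →
          (μ.withDensity g) V ≤ (μ.withDensity f) V :=
        fun V hV _ => rear_dom_upper μ f hf ha hV
      have h2 := prod_dom (ν₁ := μ.withDensity g) (ν₂ := μ.withDensity f) h1 hU hUm
      rwa [hQ₁eq] at h2
    have hineq : ∫⁻ x, ENNReal.ofReal (T x) ∂Q'
        ≤ ∫⁻ x, ENNReal.ofReal (T x) ∂(Q₁.prod Q₁) :=
      st_dom hdom (ENNReal.measurable_ofReal.comp hTm)
        (fun x y hxy => ENNReal.ofReal_le_ofReal (hTmono hxy))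
    exact ⟨Q', hmem, ⟨Q₁.prod Q₁, hQ, hdecr⟩, hineq⟩
  apply le_antisymm
  · exact le_iInf₂ fun Q hQ => iInf₂_le Q hQ.1
  · refine le_iInf₂ fun Q hQ => ?_
    obtain ⟨Q', hQ'mem, hQ'dr, hle⟩ := key Q hQ
    exact le_trans (iInf₂_le Q' ⟨hQ'mem, hQ'dr⟩) hle

end
end

section
/- Let P be a probability measure on Θ² = [0,1]×[0,1] and let 𝒬 be a set of probability measures on Θ², each absolutely continuous with respect to P, that is rearrangement invariant. Let t^X = (t^X₁,t^X₂) and t^Y = (t^Y₁,t^Y₂) be bounded measurable transfer functions Θ² → ℝ₊² whose total transfers T^X(θ,θ') := t^X₁(θ,θ')+t^X₂(θ',θ) and T^Y(θ,θ') := t^Y₁(θ,θ')+t^Y₂(θ',θ) are each nondecreasing in each argument with P{T^X = c} = P{T^Y = c} = 0 for every c ≥ 0. Assume: (WSCC) for each i ∈ {1,2} and each θ ∈ Θ there exists θ̂ ∈ [0,1] such that t^X_i(θ,θ') ≥ t^Y_i(θ,θ') whenever θ' < θ̂ and t^X_i(θ,θ') ≤ t^Y_i(θ,θ') whenever θ'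 > θ̂; (RRC) for each i ∈ {1,2} and for almost every θ (with respect to the marginal of P on bidder i's coordinate), ∫_Θ t^X_i(θ,θ') P(dθ'|θ) ≥ ∫_Θ t^Y_i(θ,θ') P(dθ'|θ), where P(·|θ) is the disintegration (conditional distribution) of the competitor's coordinate of P given that bidder i's coordinate equals θ. Then inf_{Q ∈ 𝒬} ∬_{Θ²} T^X dQ ≥ inf_{Q ∈ 𝒬} ∬_{Θ²} T^Y dQ. -/
open MeasureTheory ProbabilityTheory
open scoped ProbabilityTheory

noncomputable section

open Set
open scoped ENNReal

section AuxGeneral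
variable {Ω : Type*} [MeasurableSpace Ω]




/-- layer cake for ENNReal-valued functions. -/
lemma aux_layercake (ρ : Measure Ω) [SFinite ρ] {g : Ω → ℝ≥0∞} (hg : Measurable g) :
    ∫⁻ x, g x ∂ρ = ∫⁻ t in Set.Ioi (0:ℝ), ρ {x | ENNReal.ofReal t < g x} := by
  have hSmeas : MeasurableSet {q : Ω × ℝ | ENNReal.ofReal q.2 < g q.1} :=
    measurableSet_lt (ENNReal.measurable_ofReal.comp measurable_snd) (hg.comp measurable_fst)
  have key : ∀ a : ℝ≥0∞, (volume.restrict (Set.Ioi (0:ℝ))) {t | ENNReal.ofReal t < a} = a := by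
    intro a
    rw [Measure.restrict_apply (measurableSet_lt ENNReal.measurable_ofReal measurable_const)]
    rcases eq_or_ne a ∞ with rfl | ha
    · have : {t : ℝ | ENNReal.ofReal t < ∞} ∩ Set.Ioi 0 = Set.Ioi 0 := by
        ext t; simp [ENNReal.ofReal_lt_top]
      rw [this, Real.volume_Ioi]
    · have : {t : ℝ | ENNReal.ofReal t < a} ∩ Set.Ioi 0 = Set.Ioo 0 a.toReal := by
        ext t
        simp only [Set.mem_inter_iff, Set.mem_setOf_eq, Set.mem_Ioi, Set.mem_Ioo]
        constructor
        · rintro ⟨h1, h2⟩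
          exact ⟨h2, (ENNReal.ofReal_lt_iff_lt_toReal h2.le ha).mp h1⟩
        · rintro ⟨h1, h2⟩
          exact ⟨(ENNReal.ofReal_lt_iff_lt_toReal h1.le ha).mpr h2, h1⟩
      rw [this, Real.volume_Ioo, sub_zero, ENNReal.ofReal_toReal ha]
  set F : Ω → ℝ → ℝ≥0∞ := fun x t =>
    Set.indicator {q : Ω × ℝ | ENNReal.ofReal q.2 < g q.1} (fun _ => 1) (x, t) with hF
  have hFmeas : AEMeasurable (Function.uncurry F) (ρ.prod (volume.restrict (Set.Ioi (0:ℝ)))) := by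
    refine Measurable.aemeasurable ?_
    have : Function.uncurry F = Set.indicator {q : Ω × ℝ | ENNReal.ofReal q.2 < g q.1}
        (fun _ => 1) := by
      funext q; rcases q with ⟨x, t⟩; rfl
    rw [this]
    exact measurable_const.indicator hSmeas
  calc ∫⁻ x, g x ∂ρ
      = ∫⁻ x, ∫⁻ t in Set.Ioi (0:ℝ), F x t ∂volume ∂ρ := by
        refine lintegral_congr fun x => ?_
        have h1 : ∀ t : ℝ, F x t
            = Set.indicator {t : ℝ | ENNReal.ofReal t < g x} (fun _ => 1) t := by
          intro t
          simp only [hF, Set.indicator_apply, Set.mem_setOf_eq]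
        simp_rw [h1]
        rw [lintegral_indicator_const
          (measurableSet_lt ENNReal.measurable_ofReal measurable_const) (1 : ℝ≥0∞), one_mul, key]
    _ = ∫⁻ t in Set.Ioi (0:ℝ), ∫⁻ x, F x t ∂ρ ∂volume := lintegral_lintegral_swap hFmeas
    _ = ∫⁻ t in Set.Ioi (0:ℝ), ρ {x | ENNReal.ofReal t < g x} ∂volume := by
        refine lintegral_congr fun t => ?_
        have h1 : ∀ x : Ω, F x t
            = Set.indicator {x : Ω | ENNReal.ofReal t < g x} (fun _ => 1) x := by
          intro x
          simp only [hF, Set.indicator_apply, Set.mem_setOf_eq]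
        simp_rw [h1]
        rw [lintegral_indicator_const (measurableSet_lt measurable_const hg) (1 : ℝ≥0∞), one_mul]

/-- exchange lemma. -/
lemma aux_exchange (ρ : Measure Ω) [IsFiniteMeasure ρ] {h : Ω → ℝ≥0∞} {A B : Set Ω}
    (hA : MeasurableSet A) (hB : MeasurableSet B) (hAB : ρ A = ρ B) (c : ℝ≥0∞)
    (h1 : ∀ x ∈ A \ B, c ≤ h x) (h2 : ∀ x ∈ B \ A, h x ≤ c) :
    ∫⁻ x in B, h x ∂ρ ≤ ∫⁻ x in A, h x ∂ρ := by
  have hd : ρ (A \ B) = ρ (B \ A) := by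
    have e1 := measure_inter_add_diff (μ := ρ) A hB
    have e2 := measure_inter_add_diff (μ := ρ) B hA
    rw [Set.inter_comm B A] at e2
    rw [hAB, ← e2] at e1
    exact (ENNReal.add_right_inj (measure_ne_top ρ _)).mp e1
  have hBsplit : ∫⁻ x in B, h x ∂ρ = ∫⁻ x in B ∩ A, h x ∂ρ + ∫⁻ x in B \ A, h x ∂ρ := by
    rw [← lintegral_inter_add_diff h B hA]
  have hAsplit : ∫⁻ x in A, h x ∂ρ = ∫⁻ x in B ∩ A, h x ∂ρ + ∫⁻ x in A \ B, h x ∂ρ := by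
    rw [Set.inter_comm B A, ← lintegral_inter_add_diff h A hB]
  rw [hBsplit, hAsplit]
  refine add_le_add_right ?_ _
  calc ∫⁻ x in B \ A, h x ∂ρ ≤ ∫⁻ _ in B \ A, c ∂ρ :=
        setLIntegral_mono' (hB.diff hA) h2
    _ = c * ρ (B \ A) := setLIntegral_const _ _
    _ = c * ρ (A \ B) := by rw [hd]
    _ = ∫⁻ _ in A \ B, c ∂ρ := (setLIntegral_const _ _).symm
    _ ≤ ∫⁻ x in A \ B, h x ∂ρ := setLIntegral_mono' (hA.diff hB) h1

/-- Bounded nonneg measurable functions are integrable on finite measures. -/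
lemma aux_int_bdd (ρ : Measure Ω) [IsFiniteMeasure ρ] {h : Ω → ℝ}
    (hm : AEStronglyMeasurable h ρ) (M : ℝ) (h0 : ∀ x, 0 ≤ h x) (hM : ∀ x, h x ≤ M) :
    Integrable h ρ := by
  refine Integrable.mono' (integrable_const M) hm (ae_of_all _ fun x => ?_)
  rw [Real.norm_eq_abs, abs_of_nonneg (h0 x)]
  exact hM x





/-- probability integral transform-ish lemma. -/
lemma aux_pit (ρ : Measure Ω) [IsProbabilityMeasure ρ] {W : Ω → ℝ} (hWm : Measurable W)
    (hW0 : ∀ x, 0 ≤ W x) {B : ℝ} (hWB : ∀ x, W x ≤ B)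
    (hatom : ∀ s : ℝ, 0 ≤ s → ρ {x | W x = s} = 0) (v : ℝ≥0∞) (hv : v ≤ 1) :
    ∃ d : ℝ, {x | ρ {y | W y ≤ W x} < v} = {x | W x < d} ∧ ρ {x | W x < d} = v := by
  have hmle : ∀ s : ℝ, MeasurableSet {x | W x ≤ s} := fun s => hWm measurableSet_Iic
  rcases eq_or_ne v 0 with rfl | hv0
  · refine ⟨0, ?_, ?_⟩
    · ext x
      simp only [Set.mem_setOf_eq]
      constructor
      · intro hx; exact absurd hx (by simp)
      · intro hx; exact absurd hx (not_lt.mpr (hW0 x))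
    · have he : {x | W x < 0} = (∅ : Set Ω) := by
        ext x
        simp only [Set.mem_setOf_eq, Set.mem_empty_iff_false, iff_false, not_lt]
        exact hW0 x
      rw [he, measure_empty]
  have hv0' : 0 < v := pos_iff_ne_zero.mpr hv0
  set S : Set ℝ := {s : ℝ | v ≤ ρ {x | W x ≤ s}} with hS
  have hBS : B ∈ S := by
    have hu : {x | W x ≤ B} = Set.univ := by
      ext x; simp only [Set.mem_setOf_eq, Set.mem_univ, iff_true]; exact hWB x
    simp only [hS, Set.mem_setOf_eq, hu, measure_univ]
    exact hv
  have hSne : S.Nonempty := ⟨B, hBS⟩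
  have hlb : ∀ s ∈ S, (0:ℝ) ≤ s := by
    intro s hs
    by_contra hneg
    push_neg at hneg
    have he : {x | W x ≤ s} = (∅ : Set Ω) := by
      ext x
      simp only [Set.mem_setOf_eq, Set.mem_empty_iff_false, iff_false, not_le]
      exact lt_of_lt_of_le hneg (hW0 x)
    rw [hS, Set.mem_setOf_eq, he, measure_empty] at hs
    exact absurd hs (not_le.mpr hv0')
  have hbdd : BddBelow S := ⟨0, hlb⟩
  set d : ℝ := sInf S with hd
  have hd0 : 0 ≤ d := le_csInf hSne hlb
  set eps : ℕ → ℝ := fun n => 1/(n+1) with heps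
  have heps_pos : ∀ n, (0:ℝ) < eps n := fun n => by positivity
  have heps_anti : ∀ m n : ℕ, m ≤ n → eps n ≤ eps m := by
    intro m n hmn
    apply one_div_le_one_div_of_le (by positivity)
    have : (m:ℝ) ≤ n := by exact_mod_cast hmn
    linarith
  -- (i)
  have hi : v ≤ ρ {x | W x ≤ d} := by
    have hseq : {x | W x ≤ d} = ⋂ n : ℕ, {x | W x ≤ d + eps n} := by
      ext x
      simp only [Set.mem_setOf_eq, Set.mem_iInter]
      constructor
      · intro hx n; linarith [heps_pos n]
      · intro hx
        by_contra hlt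
        push_neg at hlt
        obtain ⟨n, hn⟩ := exists_nat_one_div_lt (sub_pos.mpr hlt)
        have := hx n
        rw [heps] at this
        linarith
    have hdir : Directed (· ⊇ ·) fun n : ℕ => {x | W x ≤ d + eps n} := by
      refine Antitone.directed_ge fun m n hmn x hx => ?_
      simp only [Set.mem_setOf_eq] at hx ⊢
      linarith [heps_anti m n hmn]
    rw [hseq, Directed.measure_iInter (fun n => (hmle _).nullMeasurableSet) hdir
      ⟨0, measure_ne_top _ _⟩]
    refine le_iInf fun n => ?_
    have hlt : sInf S < d + eps n := by rw [← hd]; linarith [heps_pos n]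
    obtain ⟨s, hsS, hslt⟩ := (csInf_lt_iff hbdd hSne).mp hlt
    exact le_trans hsS (measure_mono fun x hx => le_trans hx hslt.le)
  -- (ii)
  have hii : ∀ s : ℝ, s < d → ρ {x | W x ≤ s} < v := by
    intro s hs
    refine lt_of_not_ge fun hle => ?_
    exact absurd (csInf_le hbdd (show s ∈ S from hle)) (not_le.mpr hs)
  -- (iii)
  have hiii : ρ {x | W x < d} ≤ v := by
    have hseq : {x | W x < d} = ⋃ n : ℕ, {x | W x ≤ d - eps n} := by
      ext x
      simp only [Set.mem_setOf_eq, Set.mem_iUnion]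
      constructor
      · intro hx
        obtain ⟨n, hn⟩ := exists_nat_one_div_lt (sub_pos.mpr hx)
        exact ⟨n, by rw [heps]; linarith⟩
      · rintro ⟨n, hn⟩
        linarith [heps_pos n]
    have hdir : Directed (· ⊆ ·) fun n : ℕ => {x | W x ≤ d - eps n} := by
      refine Monotone.directed_le fun m n hmn x hx => ?_
      simp only [Set.mem_setOf_eq] at hx ⊢
      linarith [heps_anti m n hmn]
    rw [hseq, Directed.measure_iUnion hdir]
    exact iSup_le fun n => (hii _ (by linarith [heps_pos n])).le
  have hlt_eq : ρ {x | W x < d} = ρ {x | W x ≤ d} := by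
    refine le_antisymm (measure_mono fun x hx => ?_) ?_
    · exact le_of_lt (show W x < d from hx)
    calc ρ {x | W x ≤ d} ≤ ρ ({x | W x < d} ∪ {x | W x = d}) := by
          refine measure_mono fun x hx => ?_
          rcases lt_or_eq_of_le (show W x ≤ d from hx) with h | h
          · exact Or.inl h
          · exact Or.inr h
      _ ≤ ρ {x | W x < d} + ρ {x | W x = d} := measure_union_le _ _
      _ = ρ {x | W x < d} := by rw [hatom d hd0, add_zero]
  have hfinal : ρ {x | W x < d} = v := le_antisymm hiii (by rw [hlt_eq]; exact hi)
  refine ⟨d, ?_, hfinal⟩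
  ext x
  simp only [Set.mem_setOf_eq]
  constructor
  · intro hx
    by_contra hge
    push_neg at hge
    exact absurd (le_trans hi (measure_mono fun y hy => le_trans hy hge)) (not_le.mpr hx)
  · intro hx
    exact hii (W x) hx


end AuxGeneral

section AuxOrder
variable {Ω : Type*} [MeasurableSpace Ω] [Preorder Ω]




lemma aux_main (P : Measure Ω) [IsProbabilityMeasure P]
    (X Y : Ω → ℝ) (hXmeas : Measurable X) (hYmeas : Measurable Y)
    (hX0 : ∀ x, 0 ≤ X x) (hY0 : ∀ x, 0 ≤ Y x) {B : ℝ}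
    (hXB : ∀ x, X x ≤ B) (hYB : ∀ x, Y x ≤ B)
    (hXmono : Monotone X)
    (hXatom : ∀ c : ℝ, 0 ≤ c → P {x | X x = c} = 0)
    (hYatom : ∀ c : ℝ, 0 ≤ c → P {x | Y x = c} = 0)
    (hsect : ∀ L : Set Ω, MeasurableSet L → IsLowerSet L →
      ∫⁻ x in L, ENNReal.ofReal (Y x) ∂P ≤ ∫⁻ x in L, ENNReal.ofReal (X x) ∂P)
    (Q : Measure Ω) [IsProbabilityMeasure Q] (hQac : Q ≪ P) :
    ∃ g : Ω → ℝ≥0∞, Measurable g ∧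
      (∀ c : ℝ≥0∞, P {x | g x ≤ c} = P {x | Q.rnDeriv P x ≤ c}) ∧
      (∫⁻ x, g x ∂P = 1) ∧
      ∫⁻ x, ENNReal.ofReal (Y x) ∂(P.withDensity g)
        ≤ ∫⁻ x, ENNReal.ofReal (X x) ∂Q := by
  classical
  set f : Ω → ℝ≥0∞ := Q.rnDeriv P with hfdef
  have hfm : Measurable f := Measure.measurable_rnDeriv Q P
  have hQwd : P.withDensity f = Q := Measure.withDensity_rnDeriv_eq Q P hQac
  have hf1 : ∫⁻ x, f x ∂P = 1 := by
    have h := congrArg (fun μ : Measure Ω => μ Set.univ) hQwd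
    simp only [withDensity_apply f MeasurableSet.univ, setLIntegral_univ, measure_univ] at h
    exact h
  set m : ℝ≥0∞ → ℝ≥0∞ := fun t => P {x | t < f x} with hmdef
  have hm_anti : Antitone m := fun t₁ t₂ h =>
    measure_mono fun x hx => lt_of_le_of_lt h hx
  have hm_le_one : ∀ t, m t ≤ 1 := fun t => prob_le_one
  have hm_rc : ∀ t : ℝ≥0∞, t ≠ ∞ → ∀ v, v < m t → ∃ t', t < t' ∧ v < m t' := by
    intro t ht v hv
    set U : ℕ → Set Ω := fun n => {x | t + ENNReal.ofReal (1/(n+1)) < f x} with hU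
    have hUdir : Directed (· ⊆ ·) U := by
      refine Monotone.directed_le fun i j hij x hx => ?_
      simp only [hU, Set.mem_setOf_eq] at hx ⊢
      refine lt_of_le_of_lt (add_le_add_right (ENNReal.ofReal_le_ofReal ?_) t) hx
      apply one_div_le_one_div_of_le (by positivity)
      have : (i:ℝ) ≤ j := by exact_mod_cast hij
      linarith
    have hUorig : {x | t < f x} = ⋃ n, U n := by
      ext x
      simp only [Set.mem_setOf_eq, Set.mem_iUnion, hU]
      constructor
      · intro hx
        obtain ⟨r, hr0, har, hrb⟩ := ENNReal.lt_iff_exists_real_btwn.mp hx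
        have htr : t.toReal < r := (ENNReal.lt_ofReal_iff_toReal_lt ht).mp har
        obtain ⟨n, hn⟩ := exists_nat_one_div_lt (sub_pos.mpr htr)
        refine ⟨n, lt_of_le_of_lt ?_ hrb⟩
        calc t + ENNReal.ofReal (1/(n+1))
            = ENNReal.ofReal t.toReal + ENNReal.ofReal (1/(n+1)) := by
              rw [ENNReal.ofReal_toReal ht]
          _ = ENNReal.ofReal (t.toReal + 1/(n+1)) := by
              rw [ENNReal.ofReal_add ENNReal.toReal_nonneg (by positivity)]
          _ ≤ ENNReal.ofReal r := ENNReal.ofReal_le_ofReal (by linarith)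
      · rintro ⟨n, hn⟩
        exact lt_of_le_of_lt le_self_add hn
    have hmsup : m t = ⨆ n, P (U n) := by
      rw [hmdef]
      simp only
      rw [hUorig, Directed.measure_iUnion hUdir]
    rw [hmsup] at hv
    obtain ⟨n, hn⟩ := lt_iSup_iff.mp hv
    refine ⟨t + ENNReal.ofReal (1/(n+1)), ?_, hn⟩
    exact ENNReal.lt_add_right ht (ENNReal.ofReal_pos.mpr (by positivity)).ne'
  set G : ℝ≥0∞ → ℝ≥0∞ := fun v => sInf {t | m t ≤ v} with hGdef
  have hG_anti : Antitone G := fun v₁ v₂ h =>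
    sInf_le_sInf fun t ht => le_trans ht h
  have hGm : Measurable G := hG_anti.measurable
  set u : Ω → ℝ≥0∞ := fun x => P {y | Y y ≤ Y x} with hudef
  have hum : Measurable u := by
    have hmono : Monotone (fun s : ℝ => P {y | Y y ≤ s}) := fun s₁ s₂ h =>
      measure_mono fun y hy => le_trans hy h
    exact hmono.measurable.comp hYmeas
  set g : Ω → ℝ≥0∞ := fun x => G (u x) with hgdef
  have hgm : Measurable g := hGm.comp hum
  -- K1
  have hK1 : ∀ t : ℝ≥0∞, t ≠ ∞ → {x | t < g x} = {x | u x < m t} := by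
    intro t ht
    ext x
    simp only [Set.mem_setOf_eq, hgdef, hGdef]
    constructor
    · intro h
      by_contra hc
      push_neg at hc
      have hmem : t ∈ {t' : ℝ≥0∞ | m t' ≤ u x} := hc
      exact absurd (sInf_le hmem) (not_le.mpr h)
    · intro h
      obtain ⟨t', htt', hvt'⟩ := hm_rc t ht (u x) h
      refine lt_of_lt_of_le htt' (le_sInf fun s hs => ?_)
      by_contra hst
      push_neg at hst
      exact absurd (lt_of_lt_of_le hvt' (hm_anti hst.le)) (not_lt.mpr hs)
  -- PIT
  have hpitY := fun (v : ℝ≥0∞) (hv : v ≤ 1) => aux_pit P hYmeas hY0 hYB hYatom v hv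
  have hpitX := fun (v : ℝ≥0∞) (hv : v ≤ 1) => aux_pit P hXmeas hX0 hXB hXatom v hv
  -- K3
  have hK3 : ∀ t : ℝ≥0∞, t ≠ ∞ → P {x | t < g x} = m t := by
    intro t ht
    obtain ⟨d, hdset, hdP⟩ := hpitY (m t) (hm_le_one t)
    rw [hK1 t ht]
    rw [show {x | u x < m t} = {x | Y x < d} from hdset]
    exact hdP
  -- total mass
  have hg1 : ∫⁻ x, g x ∂P = 1 := by
    rw [aux_layercake P hgm, ← hf1, aux_layercake P hfm]
    refine lintegral_congr fun t => ?_
    exact hK3 _ ENNReal.ofReal_ne_top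
  -- levels
  have hlevel : ∀ c : ℝ≥0∞, P {x | g x ≤ c} = P {x | f x ≤ c} := by
    intro c
    rcases eq_or_ne c ∞ with rfl | hc
    · have h1 : {x : Ω | g x ≤ ∞} = Set.univ := by
        ext x; simp
      have h2 : {x : Ω | f x ≤ ∞} = Set.univ := by
        ext x; simp
      rw [h1, h2]
    · have hcg : {x | g x ≤ c} = {x | c < g x}ᶜ := by
        ext x; simp [not_lt]
      have hcf : {x | f x ≤ c} = {x | c < f x}ᶜ := by
        ext x; simp [not_lt]
      rw [hcg, hcf,
        measure_compl (show MeasurableSet {x | c < g x} from hgm measurableSet_Ioi)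
          (measure_ne_top _ _),
        measure_compl (show MeasurableSet {x | c < f x} from hfm measurableSet_Ioi)
          (measure_ne_top _ _), hK3 c hc, hmdef]
  refine ⟨g, hgm, hlevel, hg1, ?_⟩
  -- key inequality
  have hofYm : Measurable fun x => ENNReal.ofReal (Y x) := hYmeas.ennreal_ofReal
  have hofXm : Measurable fun x => ENNReal.ofReal (X x) := hXmeas.ennreal_ofReal
  have keystep : ∀ t : ℝ,
      (P.withDensity fun x => ENNReal.ofReal (Y x)) {x | ENNReal.ofReal t < g x}
        ≤ (P.withDensity fun x => ENNReal.ofReal (X x)) {x | ENNReal.ofReal t < f x} := by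
    intro t
    obtain ⟨d, hdset, hdP⟩ := hpitY (m (ENNReal.ofReal t)) (hm_le_one _)
    obtain ⟨c, hcset, hcP⟩ := hpitX (m (ENNReal.ofReal t)) (hm_le_one _)
    have hsetg : {x | ENNReal.ofReal t < g x} = {x | Y x < d} :=
      (hK1 _ ENNReal.ofReal_ne_top).trans hdset
    have hmYd : MeasurableSet {x | Y x < d} := hYmeas measurableSet_Iio
    have hmXc : MeasurableSet {x | X x < c} := hXmeas measurableSet_Iio
    have hmft : MeasurableSet {x | ENNReal.ofReal t < f x} := hfm measurableSet_Ioi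
    rw [hsetg, withDensity_apply _ hmYd, withDensity_apply _ hmft]
    have hPft : P {x | ENNReal.ofReal t < f x} = m (ENNReal.ofReal t) := rfl
    calc ∫⁻ x in {x | Y x < d}, ENNReal.ofReal (Y x) ∂P
        ≤ ∫⁻ x in {x | X x < c}, ENNReal.ofReal (Y x) ∂P := by
          refine aux_exchange P hmXc hmYd (by rw [hcP, hdP]) (ENNReal.ofReal d) ?_ ?_
          · rintro x ⟨-, hx2⟩
            simp only [Set.mem_setOf_eq, not_lt] at hx2
            exact ENNReal.ofReal_le_ofReal hx2
          · rintro x ⟨hx1, -⟩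
            exact ENNReal.ofReal_le_ofReal (le_of_lt hx1)
      _ ≤ ∫⁻ x in {x | X x < c}, ENNReal.ofReal (X x) ∂P := by
          refine hsect _ hmXc ?_
          intro x y hxy hx
          exact lt_of_le_of_lt (hXmono hxy) hx
      _ ≤ ∫⁻ x in {x | ENNReal.ofReal t < f x}, ENNReal.ofReal (X x) ∂P := by
          refine aux_exchange P hmft hmXc (by rw [hPft, hcP]) (ENNReal.ofReal c) ?_ ?_
          · rintro x ⟨-, hx2⟩
            simp only [Set.mem_setOf_eq, not_lt] at hx2
            exact ENNReal.ofReal_le_ofReal hx2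
          · rintro x ⟨hx1, -⟩
            exact ENNReal.ofReal_le_ofReal (le_of_lt hx1)
  calc ∫⁻ x, ENNReal.ofReal (Y x) ∂(P.withDensity g)
      = ∫⁻ x, (g * fun x => ENNReal.ofReal (Y x)) x ∂P :=
        lintegral_withDensity_eq_lintegral_mul P hgm hofYm
    _ = ∫⁻ x, ((fun x => ENNReal.ofReal (Y x)) * g) x ∂P := by
        refine lintegral_congr fun x => ?_
        simp [mul_comm]
    _ = ∫⁻ x, g x ∂(P.withDensity fun x => ENNReal.ofReal (Y x)) :=
        (lintegral_withDensity_eq_lintegral_mul P hofYm hgm).symm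
    _ = ∫⁻ t in Set.Ioi (0:ℝ),
          (P.withDensity fun x => ENNReal.ofReal (Y x)) {x | ENNReal.ofReal t < g x} :=
        aux_layercake _ hgm
    _ ≤ ∫⁻ t in Set.Ioi (0:ℝ),
          (P.withDensity fun x => ENNReal.ofReal (X x)) {x | ENNReal.ofReal t < f x} :=
        lintegral_mono fun t => keystep t
    _ = ∫⁻ x, f x ∂(P.withDensity fun x => ENNReal.ofReal (X x)) :=
        (aux_layercake _ hfm).symm
    _ = ∫⁻ x, ((fun x => ENNReal.ofReal (X x)) * f) x ∂P :=
        lintegral_withDensity_eq_lintegral_mul P hofXm hfm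
    _ = ∫⁻ x, (f * fun x => ENNReal.ofReal (X x)) x ∂P := by
        refine lintegral_congr fun x => ?_
        simp [mul_comm]
    _ = ∫⁻ x, ENNReal.ofReal (X x) ∂(P.withDensity f) :=
        (lintegral_withDensity_eq_lintegral_mul P hfm hofXm).symm
    _ = ∫⁻ x, ENNReal.ofReal (X x) ∂Q := by rw [hQwd]


end AuxOrder




lemma aux_sect (ν : Measure Θ) [IsProbabilityMeasure ν] (κ : Kernel Θ Θ) [IsMarkovKernel κ]
    (a b : Θ → Θ → ℝ) (ham : Measurable (Function.uncurry a))
    (hbm : Measurable (Function.uncurry b))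
    (M : ℝ) (ha0 : ∀ x y, 0 ≤ a x y) (haM : ∀ x y, a x y ≤ M)
    (hb0 : ∀ x y, 0 ≤ b x y) (hbM : ∀ x y, b x y ≤ M)
    (hW : ∀ θ : Θ, ∃ θh : Θ, (∀ θ', θ' < θh → b θ θ' ≤ a θ θ') ∧
      (∀ θ', θh < θ' → a θ θ' ≤ b θ θ'))
    (hR : ∀ᵐ θ ∂ν, ∫ θ', b θ θ' ∂(κ θ) ≤ ∫ θ', a θ θ' ∂(κ θ))
    {L : Set (Θ × Θ)} (hLm : MeasurableSet L) (hL : IsLowerSet L) :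
    ∫ x in L, b x.1 x.2 ∂(ν ⊗ₘ κ) ≤ ∫ x in L, a x.1 x.2 ∂(ν ⊗ₘ κ) := by
  have hM0 : 0 ≤ M := le_trans (ha0 ⟨0, by norm_num⟩ ⟨0, by norm_num⟩)
    (haM ⟨0, by norm_num⟩ ⟨0, by norm_num⟩)
  set fa : Θ × Θ → ℝ := L.indicator (Function.uncurry a) with hfa
  set fb : Θ × Θ → ℝ := L.indicator (Function.uncurry b) with hfb
  have hbound : ∀ (c : Θ → Θ → ℝ), (∀ x y, 0 ≤ c x y) → (∀ x y, c x y ≤ M) →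
      ∀ z : Θ × Θ, ‖L.indicator (Function.uncurry c) z‖ ≤ M := by
    intro c hc0 hcM z
    rw [Real.norm_eq_abs]
    rcases em (z ∈ L) with h | h
    · rw [Set.indicator_of_mem h]
      have : Function.uncurry c z = c z.1 z.2 := rfl
      rw [this, abs_of_nonneg (hc0 z.1 z.2)]
      exact hcM z.1 z.2
    · rw [Set.indicator_of_notMem h, abs_zero]; exact hM0
  have hfaI : Integrable fa (ν ⊗ₘ κ) := by
    refine Integrable.mono' (integrable_const M)
      ((ham.indicator hLm).aestronglyMeasurable) (ae_of_all _ ?_)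
    exact hbound a ha0 haM
  have hfbI : Integrable fb (ν ⊗ₘ κ) := by
    refine Integrable.mono' (integrable_const M)
      ((hbm.indicator hLm).aestronglyMeasurable) (ae_of_all _ ?_)
    exact hbound b hb0 hbM
  have hgoal : ∫ z, fb z ∂(ν ⊗ₘ κ) ≤ ∫ z, fa z ∂(ν ⊗ₘ κ) := by
    rw [Measure.integral_compProd hfaI, Measure.integral_compProd hfbI]
    -- integrability of inner integrals
    have hIa : Integrable (fun θ => ∫ y, fa (θ, y) ∂κ θ) ν := by
      refine Integrable.mono' (integrable_const M)
        ((ham.indicator hLm).stronglyMeasurable.integral_kernel_prod_right').aestronglyMeasurable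
        (ae_of_all _ fun θ => ?_)
      calc ‖∫ y, fa (θ, y) ∂κ θ‖ ≤ ∫ y, ‖fa (θ, y)‖ ∂κ θ := norm_integral_le_integral_norm _
        _ ≤ ∫ _, M ∂κ θ := by
            refine integral_mono_of_nonneg (ae_of_all _ fun y => norm_nonneg _)
              (integrable_const M) (ae_of_all _ fun y => hbound a ha0 haM (θ, y))
        _ = M := by simp
    have hIb : Integrable (fun θ => ∫ y, fb (θ, y) ∂κ θ) ν := by
      refine Integrable.mono' (integrable_const M)
        ((hbm.indicator hLm).stronglyMeasurable.integral_kernel_prod_right').aestronglyMeasurable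
        (ae_of_all _ fun θ => ?_)
      calc ‖∫ y, fb (θ, y) ∂κ θ‖ ≤ ∫ y, ‖fb (θ, y)‖ ∂κ θ := norm_integral_le_integral_norm _
        _ ≤ ∫ _, M ∂κ θ := by
            refine integral_mono_of_nonneg (ae_of_all _ fun y => norm_nonneg _)
              (integrable_const M) (ae_of_all _ fun y => hbound b hb0 hbM (θ, y))
        _ = M := by simp
    refine integral_mono_ae hIb hIa ?_
    filter_upwards [hR] with θ hθ
    -- pointwise in θ
    set Sec : Set Θ := Prod.mk θ ⁻¹' L with hSec
    have hSecm : MeasurableSet Sec := measurable_prodMk_left hLm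
    have hre : ∀ (c : Θ → Θ → ℝ), (fun y => L.indicator (Function.uncurry c) (θ, y))
        = Sec.indicator (c θ) := by
      intro c
      funext y
      rcases em ((θ, y) ∈ L) with h | h
      · rw [Set.indicator_of_mem h, Set.indicator_of_mem (show y ∈ Sec from h)]
        rfl
      · rw [Set.indicator_of_notMem h, Set.indicator_of_notMem (show y ∉ Sec from h)]
    have hIaθ : Integrable (a θ) (κ θ) := by
      refine Integrable.mono' (integrable_const M)
        ((ham.comp measurable_prodMk_left).aestronglyMeasurable) (ae_of_all _ fun y => ?_)
      rw [Real.norm_eq_abs, abs_of_nonneg (ha0 θ y)]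
      exact haM θ y
    have hIbθ : Integrable (b θ) (κ θ) := by
      refine Integrable.mono' (integrable_const M)
        ((hbm.comp measurable_prodMk_left).aestronglyMeasurable) (ae_of_all _ fun y => ?_)
      rw [Real.norm_eq_abs, abs_of_nonneg (hb0 θ y)]
      exact hbM θ y
    show ∫ y, fb (θ, y) ∂κ θ ≤ ∫ y, fa (θ, y) ∂κ θ
    rw [show (fun y => fb (θ, y)) = Sec.indicator (b θ) from hre b,
      show (fun y => fa (θ, y)) = Sec.indicator (a θ) from hre a,
      integral_indicator hSecm, integral_indicator hSecm]
    obtain ⟨θh, hW1, hW2⟩ := hW θ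
    by_cases hmem : θh ∈ Sec
    · have hcsub : ∀ y, y ∉ Sec → θh < y := by
        intro y hy
        refine lt_of_not_ge fun hle => hy ?_
        exact hL (show (θ, y) ≤ (θ, θh) from Prod.mk_le_mk.mpr ⟨le_refl θ, hle⟩) hmem
      have hsa := integral_add_compl hSecm hIaθ
      have hsb := integral_add_compl hSecm hIbθ
      have hcomp : ∫ y in Secᶜ, a θ y ∂κ θ ≤ ∫ y in Secᶜ, b θ y ∂κ θ := by
        refine setIntegral_mono_on hIaθ.integrableOn hIbθ.integrableOn hSecm.compl ?_
        intro y hy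
        exact hW2 y (hcsub y hy)
      linarith
    · have hcsub : ∀ y, y ∈ Sec → y < θh := by
        intro y hy
        refine lt_of_not_ge fun hle => hmem ?_
        exact hL (show (θ, θh) ≤ (θ, y) from Prod.mk_le_mk.mpr ⟨le_refl θ, hle⟩) hy
      refine setIntegral_mono_on hIbθ.integrableOn hIaθ.integrableOn hSecm ?_
      intro y hy
      exact hW1 y (hcsub y hy)
  rw [← integral_indicator hLm, ← integral_indicator hLm]
  exact hgoal


theorem stmt2
    (P : Measure (Θ × Θ)) [IsProbabilityMeasure P]
    (𝒬 : Set (Measure (Θ × Θ)))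
    (h𝒬 : ∀ Q ∈ 𝒬, IsProbabilityMeasure Q ∧ Q ≪ P)
    -- rearrangement invariance of 𝒬
    (hinv : ∀ Q ∈ 𝒬, ∀ Q' : Measure (Θ × Θ), IsProbabilityMeasure Q' → Q' ≪ P →
      IsRearrangement P Q Q' → Q' ∈ 𝒬)
    -- transfer functions: tX i θ θ' is bidder i's payment, own type θ, competitor type θ'
    (tX₁ tX₂ tY₁ tY₂ : Θ → Θ → ℝ)
    (hXm₁ : Measurable (Function.uncurry tX₁)) (hXm₂ : Measurable (Function.uncurry tX₂))
    (hYm₁ : Measurable (Function.uncurry tY₁)) (hYm₂ : Measurable (Function.uncurry tY₂))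
    (hX₁0 : ∀ θ θ', 0 ≤ tX₁ θ θ') (hX₂0 : ∀ θ θ', 0 ≤ tX₂ θ θ')
    (hY₁0 : ∀ θ θ', 0 ≤ tY₁ θ θ') (hY₂0 : ∀ θ θ', 0 ≤ tY₂ θ θ')
    (hbdd : ∃ M : ℝ, ∀ θ θ', tX₁ θ θ' ≤ M ∧ tX₂ θ θ' ≤ M ∧ tY₁ θ θ' ≤ M ∧ tY₂ θ θ' ≤ M)
    -- total transfers nondecreasing in each argument
    (hTXmono : Monotone (fun x : Θ × Θ => tX₁ x.1 x.2 + tX₂ x.2 x.1))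
    (hTYmono : Monotone (fun x : Θ × Θ => tY₁ x.1 x.2 + tY₂ x.2 x.1))
    -- atomless distributions of total transfers under P
    (hXatomless : ∀ c : ℝ, 0 ≤ c → P {x | tX₁ x.1 x.2 + tX₂ x.2 x.1 = c} = 0)
    (hYatomless : ∀ c : ℝ, 0 ≤ c → P {x | tY₁ x.1 x.2 + tY₂ x.2 x.1 = c} = 0)
    -- disintegration of P: κ₁ θ is the conditional law of bidder 2's type given
    -- bidder 1's type θ, and κ₂ θ that of bidder 1's type given bidder 2's type θ
    (κ₁ κ₂ : Kernel Θ Θ) [IsMarkovKernel κ₁] [IsMarkovKernel κ₂]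
    (hκ₁ : P = P.fst ⊗ₘ κ₁)
    (hκ₂ : P.map Prod.swap = P.snd ⊗ₘ κ₂)
    -- (WSCC) weak single-crossing condition
    (hWSCC₁ : ∀ θ : Θ, ∃ θh : Θ,
      (∀ θ' : Θ, θ' < θh → tY₁ θ θ' ≤ tX₁ θ θ') ∧
      (∀ θ' : Θ, θh < θ' → tX₁ θ θ' ≤ tY₁ θ θ'))
    (hWSCC₂ : ∀ θ : Θ, ∃ θh : Θ,
      (∀ θ' : Θ, θ' < θh → tY₂ θ θ' ≤ tX₂ θ θ') ∧
      (∀ θ' : Θ, θh < θ' → tX₂ θ θ' ≤ tY₂ θ θ'))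
    -- (RRC) reference revenue condition
    (hRRC₁ : ∀ᵐ θ ∂P.fst, ∫ θ', tY₁ θ θ' ∂(κ₁ θ) ≤ ∫ θ', tX₁ θ θ' ∂(κ₁ θ))
    (hRRC₂ : ∀ᵐ θ ∂P.snd, ∫ θ', tY₂ θ θ' ∂(κ₂ θ) ≤ ∫ θ', tX₂ θ θ' ∂(κ₂ θ)) :
    (⨅ Q ∈ 𝒬, ∫⁻ x, ENNReal.ofReal (tY₁ x.1 x.2 + tY₂ x.2 x.1) ∂Q)
      ≤ ⨅ Q ∈ 𝒬, ∫⁻ x, ENNReal.ofReal (tX₁ x.1 x.2 + tX₂ x.2 x.1) ∂Q := by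
  classical
  obtain ⟨M, hM⟩ := hbdd
  have hXm₁' : Measurable fun x : Θ × Θ => tX₁ x.1 x.2 := hXm₁
  have hYm₁' : Measurable fun x : Θ × Θ => tY₁ x.1 x.2 := hYm₁
  have hXm₂' : Measurable fun x : Θ × Θ => tX₂ x.2 x.1 := hXm₂.comp measurable_swap
  have hYm₂' : Measurable fun x : Θ × Θ => tY₂ x.2 x.1 := hYm₂.comp measurable_swap
  have hXmeas : Measurable fun x : Θ × Θ => tX₁ x.1 x.2 + tX₂ x.2 x.1 := hXm₁'.add hXm₂'
  have hYmeas : Measurable fun x : Θ × Θ => tY₁ x.1 x.2 + tY₂ x.2 x.1 := hYm₁'.add hYm₂'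
  have hX0 : ∀ x : Θ × Θ, 0 ≤ tX₁ x.1 x.2 + tX₂ x.2 x.1 :=
    fun x => add_nonneg (hX₁0 _ _) (hX₂0 _ _)
  have hY0 : ∀ x : Θ × Θ, 0 ≤ tY₁ x.1 x.2 + tY₂ x.2 x.1 :=
    fun x => add_nonneg (hY₁0 _ _) (hY₂0 _ _)
  have hXB : ∀ x : Θ × Θ, tX₁ x.1 x.2 + tX₂ x.2 x.1 ≤ M + M :=
    fun x => add_le_add (hM _ _).1 (hM _ _).2.1
  have hYB : ∀ x : Θ × Θ, tY₁ x.1 x.2 + tY₂ x.2 x.1 ≤ M + M :=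
    fun x => add_le_add (hM _ _).2.2.1 (hM _ _).2.2.2
  -- the per-lower-set comparison
  have hsectXY : ∀ L : Set (Θ × Θ), MeasurableSet L → IsLowerSet L →
      ∫⁻ x in L, ENNReal.ofReal (tY₁ x.1 x.2 + tY₂ x.2 x.1) ∂P
        ≤ ∫⁻ x in L, ENNReal.ofReal (tX₁ x.1 x.2 + tX₂ x.2 x.1) ∂P := by
    intro L hLm hL
    have hYI1 : Integrable (fun x : Θ × Θ => tY₁ x.1 x.2) (P.restrict L) :=
      aux_int_bdd _ hYm₁'.aestronglyMeasurable M (fun x => hY₁0 _ _) (fun x => (hM _ _).2.2.1)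
    have hYI2 : Integrable (fun x : Θ × Θ => tY₂ x.2 x.1) (P.restrict L) :=
      aux_int_bdd _ hYm₂'.aestronglyMeasurable M (fun x => hY₂0 _ _) (fun x => (hM _ _).2.2.2)
    have hXI1 : Integrable (fun x : Θ × Θ => tX₁ x.1 x.2) (P.restrict L) :=
      aux_int_bdd _ hXm₁'.aestronglyMeasurable M (fun x => hX₁0 _ _) (fun x => (hM _ _).1)
    have hXI2 : Integrable (fun x : Θ × Θ => tX₂ x.2 x.1) (P.restrict L) :=
      aux_int_bdd _ hXm₂'.aestronglyMeasurable M (fun x => hX₂0 _ _) (fun x => (hM _ _).2.1)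
    have hcomp1 : ∫ x in L, tY₁ x.1 x.2 ∂P ≤ ∫ x in L, tX₁ x.1 x.2 ∂P := by
      have h := aux_sect P.fst κ₁ tX₁ tY₁ hXm₁ hYm₁ M hX₁0 (fun x y => (hM x y).1) hY₁0
        (fun x y => (hM x y).2.2.1) hWSCC₁ hRRC₁ hLm hL
      rwa [← hκ₁] at h
    have hcomp2 : ∫ x in L, tY₂ x.2 x.1 ∂P ≤ ∫ x in L, tX₂ x.2 x.1 ∂P := by
      set L' : Set (Θ × Θ) := Prod.swap ⁻¹' L with hL'def
      have hL'm : MeasurableSet L' := measurable_swap hLm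
      have hL'l : IsLowerSet L' := by
        intro x y hyx hx
        exact hL (show Prod.swap y ≤ Prod.swap x from
          Prod.mk_le_mk.mpr ⟨(Prod.le_def.mp hyx).2, (Prod.le_def.mp hyx).1⟩) hx
      have h := aux_sect P.snd κ₂ tX₂ tY₂ hXm₂ hYm₂ M hX₂0 (fun x y => (hM x y).2.1) hY₂0
        (fun x y => (hM x y).2.2.2) hWSCC₂ hRRC₂ hL'm hL'l
      rw [← hκ₂] at h
      have htrans : ∀ h2 : Θ → Θ → ℝ, Measurable (Function.uncurry h2) →
          ∫ y in L', h2 y.1 y.2 ∂(P.map Prod.swap) = ∫ x in L, h2 x.2 x.1 ∂P := by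
        intro h2 hh2
        have hh2' : AEStronglyMeasurable (fun y : Θ × Θ => h2 y.1 y.2) (P.map Prod.swap) :=
          (show Measurable fun y : Θ × Θ => h2 y.1 y.2 from hh2).aestronglyMeasurable
        rw [setIntegral_map hL'm hh2' measurable_swap.aemeasurable]
        have hLL : Prod.swap ⁻¹' L' = L := by
          rw [hL'def]
          ext z
          simp
        rw [hLL]
        simp only [Prod.fst_swap, Prod.snd_swap]
      rw [← htrans tY₂ hYm₂, ← htrans tX₂ hXm₂]
      exact h
    have hsum : ∫ x in L, (tY₁ x.1 x.2 + tY₂ x.2 x.1) ∂P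
        ≤ ∫ x in L, (tX₁ x.1 x.2 + tX₂ x.2 x.1) ∂P := by
      rw [integral_add hYI1 hYI2, integral_add hXI1 hXI2]
      exact add_le_add hcomp1 hcomp2
    calc ∫⁻ x in L, ENNReal.ofReal (tY₁ x.1 x.2 + tY₂ x.2 x.1) ∂P
        = ENNReal.ofReal (∫ x in L, (tY₁ x.1 x.2 + tY₂ x.2 x.1) ∂P) :=
          (ofReal_integral_eq_lintegral_ofReal (hYI1.add hYI2)
            (ae_of_all _ fun x => hY0 x)).symm
      _ ≤ ENNReal.ofReal (∫ x in L, (tX₁ x.1 x.2 + tX₂ x.2 x.1) ∂P) :=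
          ENNReal.ofReal_le_ofReal hsum
      _ = ∫⁻ x in L, ENNReal.ofReal (tX₁ x.1 x.2 + tX₂ x.2 x.1) ∂P :=
          ofReal_integral_eq_lintegral_ofReal (hXI1.add hXI2) (ae_of_all _ fun x => hX0 x)
  refine le_iInf₂ fun Q hQ => ?_
  obtain ⟨hQprob, hQac⟩ := h𝒬 Q hQ
  haveI := hQprob
  obtain ⟨g, hgm, hlevel, hg1, hineq⟩ :=
    aux_main P (fun x : Θ × Θ => tX₁ x.1 x.2 + tX₂ x.2 x.1)
      (fun x : Θ × Θ => tY₁ x.1 x.2 + tY₂ x.2 x.1) hXmeas hYmeas hX0 hY0 hXB hYB hTXmono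
      hXatomless hYatomless hsectXY Q hQac
  have hQ'prob : IsProbabilityMeasure (P.withDensity g) :=
    ⟨by rw [withDensity_apply _ MeasurableSet.univ, setLIntegral_univ]; exact hg1⟩
  have hrearr : IsRearrangement P Q (P.withDensity g) := by
    intro c
    have hae : (P.withDensity g).rnDeriv P =ᵐ[P] g := Measure.rnDeriv_withDensity P hgm
    have h1 : P {ω | (P.withDensity g).rnDeriv P ω ≤ c} = P {ω | g ω ≤ c} := by
      refine measure_congr ?_
      filter_upwards [hae] with x hx
      show ((P.withDensity g).rnDeriv P x ≤ c) = (g x ≤ c)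
      rw [hx]
    rw [h1]
    exact hlevel c
  exact iInf₂_le_of_le (P.withDensity g)
    (hinv Q hQ _ hQ'prob (withDensity_absolutelyContinuous P g) hrearr) hineq


end
end

section
/- Let f : [0,1] → (0,∞) be a continuous probability density with cdf F(θ) = ∫₀^θ f(z) dz, F(1) = 1, let μ_F be the associated probability measure on [0,1], and let P = μ_F ⊗ μ_F on Θ² = [0,1]×[0,1]. Let 𝒬 be a set of probability measures on Θ², each absolutely continuous with respect to P, that is rearrangement invariant and contains P. Then the worst-case revenue of the first-price auction is at least that of the second-price auction: inf_{Q ∈ 𝒬} ∬ [t^I₁(θ,θ') + t^I₂(θ',θ)] dQ ≥ inf_{Q ∈ 𝒬} ∬ [t^{II}₁(θ,θ') + t^{II}₂(θ',θ)] dQ. -/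
open MeasureTheory

noncomputable section

open Set

/-- rotation by `c` on `[0,s)`, identity elsewhere -/
def rotR (s c w : ℝ) : ℝ := if w < s then (if w + c < s then w + c else w + c - s) else w

lemma rotR_mem {s c w : ℝ} (hw0 : 0 ≤ w) (hw1 : w ≤ 1) (hc0 : 0 ≤ c) (hcs : c ≤ s)
    (hs1 : s ≤ 1) : rotR s c w ∈ Icc (0:ℝ) 1 := by
  unfold rotR; split_ifs with h1 h2 <;> constructor <;> nlinarith

lemma rotR_nonneg {s c w : ℝ} (hw0 : 0 ≤ w) (hc0 : 0 ≤ c) : 0 ≤ rotR s c w := by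
  unfold rotR; split_ifs with h1 h2 <;> nlinarith

lemma rotR_le_s {s c w : ℝ} (hw : w ≤ s) (hc0 : 0 ≤ c) (hcs : c ≤ s) : rotR s c w ≤ s := by
  unfold rotR; split_ifs with h1 h2 <;> nlinarith

lemma rotR_lt_s {s c w : ℝ} (hw0 : 0 ≤ w) (hw : w < s) (hcs : c ≤ s) : rotR s c w < s := by
  unfold rotR; split_ifs with h1 h2 <;> nlinarith

lemma rotR_of_ge {s c w : ℝ} (hw : s ≤ w) : rotR s c w = w := by
  unfold rotR; rw [if_neg (not_lt.2 hw)]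

lemma rotR_inv {s c a : ℝ} (ha0 : 0 ≤ a) (ha : a < s) (hc0 : 0 ≤ c) (hcs : c ≤ s) :
    rotR s (s - c) (rotR s c a) = a := by
  unfold rotR
  rcases lt_or_ge (a + c) s with h | h
  · rw [if_pos ha, if_pos h, if_pos (by nlinarith), if_neg (by push_neg; nlinarith)]; ring
  · rw [if_pos ha, if_neg (not_lt.2 h), if_pos (by nlinarith), if_pos (by nlinarith)]; ring

lemma measurable_rotR : Measurable fun p : ℝ × ℝ × ℝ => rotR p.1 p.2.1 p.2.2 := by
  unfold rotR
  apply Measurable.ite (measurableSet_lt (by fun_prop) (by fun_prop))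
  · apply Measurable.ite (measurableSet_lt (by fun_prop) (by fun_prop)) <;> fun_prop
  · fun_prop

/-- rotation preserves Lebesgue restricted to [0,1] when it only moves [0,s) ⊆ [0,1]. -/
lemma map_rotR_restrict {s c : ℝ} (hs0 : 0 < s) (hs1 : s ≤ 1) (hc0 : 0 ≤ c) (hcs : c ≤ s) :
    Measure.map (rotR s c) (volume.restrict (Icc (0:ℝ) 1)) = volume.restrict (Icc (0:ℝ) 1) := by
  have hmeas : Measurable (rotR s c) :=
    measurable_rotR.comp (measurable_const.prodMk (measurable_const.prodMk measurable_id))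
  have hsplit : volume.restrict (Icc (0:ℝ) 1)
      = volume.restrict (Ico 0 (s - c)) + volume.restrict (Ico (s-c) s)
        + volume.restrict (Icc s 1) := by
    rw [← MeasureTheory.Measure.restrict_union (Set.Ico_disjoint_Ico_same)
      measurableSet_Ico,
      Ico_union_Ico_eq_Ico (by linarith) (by linarith),
      ← MeasureTheory.Measure.restrict_union (Set.disjoint_left.mpr (by
        intro x hx1 hx2; exact absurd hx2.1 (not_le.2 hx1.2))) measurableSet_Icc,
      Ico_union_Icc_eq_Icc (by linarith) hs1]
  have hIco : ∀ a b d : ℝ, Measure.map (· + d) (volume.restrict (Ico a b))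
      = volume.restrict (Ico (a + d) (b + d)) := by
    intro a b d
    have hpre : Ico a b = (· + d) ⁻¹' (Ico (a + d) (b + d)) := by
      ext x; simp only [mem_preimage, mem_Ico]
      constructor <;> intro h <;> exact ⟨by linarith [h.1], by linarith [h.2]⟩
    rw [hpre, ← Measure.restrict_map (measurable_add_const d) measurableSet_Ico,
      map_add_right_eq_self]
  rw [hsplit, Measure.map_add _ _ hmeas, Measure.map_add _ _ hmeas]
  have h1 : Measure.map (rotR s c) (volume.restrict (Ico 0 (s - c)))
      = volume.restrict (Ico c s) := by
    rw [Measure.map_congr (g := (· + c)) (by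
      refine (ae_restrict_iff' measurableSet_Ico).2 (Filter.Eventually.of_forall ?_)
      intro x hx
      have := hx.1; have := hx.2
      unfold rotR; rw [if_pos (by linarith), if_pos (by linarith)]), hIco]
    norm_num
  have h2 : Measure.map (rotR s c) (volume.restrict (Ico (s - c) s))
      = volume.restrict (Ico 0 c) := by
    rw [Measure.map_congr (g := (· + (c - s))) (by
      refine (ae_restrict_iff' measurableSet_Ico).2 (Filter.Eventually.of_forall ?_)
      intro x hx
      have := hx.1; have := hx.2
      unfold rotR; rw [if_pos (by linarith), if_neg (by push_neg; linarith)]; ring), hIco]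
    norm_num
  have h3 : Measure.map (rotR s c) (volume.restrict (Icc s 1))
      = volume.restrict (Icc s 1) := by
    rw [Measure.map_congr (g := id) (by
      refine (ae_restrict_iff' measurableSet_Icc).2 (Filter.Eventually.of_forall ?_)
      intro x hx; exact rotR_of_ge hx.1), Measure.map_id]
  rw [h1, h2, h3]
  have e1 : volume.restrict (Ico c s) + volume.restrict (Ico 0 c) = volume.restrict (Ico (0:ℝ) s) := by
    rw [← MeasureTheory.Measure.restrict_union (Set.disjoint_left.mpr (by
      intro x hx1 hx2; exact absurd hx2.2 (not_lt.2 hx1.1))) measurableSet_Ico,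
      union_comm, Ico_union_Ico_eq_Ico hc0 hcs]
  have e2 : volume.restrict (Ico 0 (s - c)) + volume.restrict (Ico (s - c) s)
      = volume.restrict (Ico (0:ℝ) s) := by
    rw [← MeasureTheory.Measure.restrict_union Set.Ico_disjoint_Ico_same measurableSet_Ico,
      Ico_union_Ico_eq_Ico (by linarith) (by linarith)]
  rw [e1, e2]
def clamp01 (u : ℝ) : ℝ := max 0 (min 1 u)

lemma clamp01_mem (u : ℝ) : clamp01 u ∈ Icc (0:ℝ) 1 :=
  ⟨le_max_left _ _, max_le zero_le_one (min_le_left _ _)⟩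

lemma clamp01_of_mem {u : ℝ} (hu : u ∈ Icc (0:ℝ) 1) : clamp01 u = u := by
  unfold clamp01; rw [min_eq_right hu.2, max_eq_right hu.1]

lemma measurable_clamp01 : Measurable clamp01 := by unfold clamp01; fun_prop

def pI : ℝ → Θ := fun w => projIcc 0 1 zero_le_one w

lemma pI_val {w : ℝ} (hw : w ∈ Icc (0:ℝ) 1) : (pI w : ℝ) = w := by
  simp [pI, projIcc_of_mem, hw]

lemma continuous_pI : Continuous pI := continuous_projIcc (h := zero_le_one)

section FIso
variable {F : ℝ → ℝ} {e : Θ ≃o Θ} (he : ∀ θ : Θ, ((e θ : Θ) : ℝ) = F θ)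
include he

lemma Fval_mem (θ : Θ) : F (θ : ℝ) ∈ Icc (0:ℝ) 1 := by rw [← he θ]; exact (e θ).2

lemma pI_F (θ : Θ) : pI (F (θ : ℝ)) = e θ := by
  apply Subtype.ext; rw [pI_val (Fval_mem he θ), he θ]

lemma Fval_le_iff {a b : Θ} : F (a:ℝ) ≤ F (b:ℝ) ↔ a ≤ b := by
  rw [← he a, ← he b, Subtype.coe_le_coe, e.le_iff_le]

lemma Fval_lt_iff {a b : Θ} : F (a:ℝ) < F (b:ℝ) ↔ a < b := by
  rw [← he a, ← he b, Subtype.coe_lt_coe, e.lt_iff_lt]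

lemma Fval_nonneg (θ : Θ) : 0 ≤ F (θ:ℝ) := (Fval_mem he θ).1
lemma Fval_le_one (θ : Θ) : F (θ:ℝ) ≤ 1 := (Fval_mem he θ).2

end FIso

/-- fiber rotation map -/
def fibT (e : Θ ≃o Θ) (F : ℝ → ℝ) (cf : ℝ → ℝ) (m v : Θ) : Θ :=
  e.symm (pI (rotR (F (m:ℝ)) (cf (F (m:ℝ))) (F (v:ℝ))))

def TG (e : Θ ≃o Θ) (F : ℝ → ℝ) (cf : ℝ → ℝ) (x : Θ × Θ) : Θ × Θ :=
  if x.2 ≤ x.1 then (x.1, fibT e F cf x.1 x.2) else (fibT e F cf x.2 x.1, x.2)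

section FIso2
variable {F : ℝ → ℝ} {e : Θ ≃o Θ} {cf : ℝ → ℝ}
  (he : ∀ θ : Θ, ((e θ : Θ) : ℝ) = F θ)
  (hcf : ∀ s ∈ Icc (0:ℝ) 1, cf s ∈ Icc 0 s)
include he hcf

lemma fibT_val (m v : Θ) :
    ((fibT e F cf m v : Θ) : ℝ)
      = ((e.symm (pI (rotR (F (m:ℝ)) (cf (F (m:ℝ))) (F (v:ℝ)))) : Θ) : ℝ) := rfl

lemma fibT_F (m v : Θ) :
    F ((fibT e F cf m v : Θ) : ℝ) = rotR (F (m:ℝ)) (cf (F (m:ℝ))) (F (v:ℝ)) := by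
  have hmem := hcf _ (Fval_mem he m)
  have hrm : rotR (F (m:ℝ)) (cf (F (m:ℝ))) (F (v:ℝ)) ∈ Icc (0:ℝ) 1 :=
    rotR_mem (Fval_nonneg he v) (Fval_le_one he v) hmem.1 hmem.2 (Fval_le_one he m)
  rw [← he (fibT e F cf m v)]
  show ((e (e.symm (pI _)) : Θ) : ℝ) = _
  rw [e.apply_symm_apply, pI_val hrm]

lemma fibT_id_of_ge (m v : Θ) (hmv : m ≤ v) : fibT e F cf m v = v := by
  unfold fibT
  rw [rotR_of_ge ((Fval_le_iff he).2 hmv), pI_F he, e.symm_apply_apply]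

lemma fibT_le (m v : Θ) (hvm : v ≤ m) : fibT e F cf m v ≤ m := by
  have hmem := hcf _ (Fval_mem he m)
  rw [← Fval_le_iff he (a := fibT e F cf m v) (b := m), fibT_F he hcf]
  exact rotR_le_s ((Fval_le_iff he).2 hvm) hmem.1 hmem.2

lemma fibT_lt (m v : Θ) (hvm : v < m) : fibT e F cf m v < m := by
  have hmem := hcf _ (Fval_mem he m)
  rw [← Fval_lt_iff he (a := fibT e F cf m v) (b := m), fibT_F he hcf]
  exact rotR_lt_s (Fval_nonneg he v) ((Fval_lt_iff he).2 hvm) hmem.2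

omit hcf in
lemma fibT_ext {m v w : Θ} (h : F ((fibT e F cf m v : Θ):ℝ) = F (w:ℝ)) :
    fibT e F cf m v = w := by
  have : ((e (fibT e F cf m v) : Θ) : ℝ) = ((e w : Θ) : ℝ) := by rw [he, he]; exact h
  exact e.injective (Subtype.ext this)

/-- inverse lemma -/
lemma fibT_inv {cf' : ℝ → ℝ} (hcf' : ∀ s, cf' s = s - cf s) (m v : Θ) :
    fibT e F cf' m (fibT e F cf m v) = v := by
  have hmem := hcf _ (Fval_mem he m)
  rcases lt_or_ge (F (v:ℝ)) (F (m:ℝ)) with hv | hv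
  · apply fibT_ext he
    rw [fibT_F he (cf := cf') (fun s hs => by
        rw [hcf' s]; exact ⟨by linarith [(hcf s hs).2], by linarith [(hcf s hs).1]⟩),
      fibT_F he hcf, hcf']
    exact rotR_inv (Fval_nonneg he v) hv hmem.1 hmem.2
  · have h1 : fibT e F cf m v = v :=
      fibT_id_of_ge he hcf m v ((Fval_le_iff he).1 hv)
    rw [h1]
    exact fibT_id_of_ge he (fun s hs => by
        rw [hcf' s]; exact ⟨by linarith [(hcf s hs).2], by linarith [(hcf s hs).1]⟩)
      m v ((Fval_le_iff he).1 hv)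

lemma TG_comp {cf' : ℝ → ℝ} (hcf' : ∀ s, cf' s = s - cf s) (x : Θ × Θ) :
    TG e F cf' (TG e F cf x) = x := by
  have hcf'2 : ∀ s ∈ Icc (0:ℝ) 1, cf' s ∈ Icc 0 s := fun s hs => by
    rw [hcf' s]; exact ⟨by linarith [(hcf s hs).2], by linarith [(hcf s hs).1]⟩
  obtain ⟨θ, θ'⟩ := x
  by_cases h : θ' ≤ θ
  · have hw : fibT e F cf θ θ' ≤ θ := fibT_le he hcf θ θ' h
    simp only [TG, h, if_true]
    simp only [hw, if_true]
    rw [fibT_inv he hcf hcf']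
  · push_neg at h
    have hw2 : fibT e F cf θ' θ < θ' := fibT_lt he hcf θ' θ h
    simp only [TG, if_neg (not_le.2 h)]
    simp only [if_neg (not_le.2 hw2)]
    rw [fibT_inv he hcf hcf']

end FIso2

def νΘ : Measure Θ := Measure.comap Subtype.val volume

lemma valEmb : MeasurableEmbedding (Subtype.val : Θ → ℝ) :=
  MeasurableEmbedding.subtype_coe measurableSet_Icc

lemma map_val_νΘ : Measure.map (Subtype.val : Θ → ℝ) νΘ = volume.restrict (Icc 0 1) := by
  rw [νΘ, valEmb.map_comap, Subtype.range_coe]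

lemma map_val_inj {ρ1 ρ2 : Measure Θ}
    (h : Measure.map (Subtype.val : Θ → ℝ) ρ1 = Measure.map (Subtype.val : Θ → ℝ) ρ2) :
    ρ1 = ρ2 := by
  ext E hE
  have hmE : MeasurableSet ((Subtype.val : Θ → ℝ) '' E) := valEmb.measurableSet_image.2 hE
  have h1 : ρ1 E = Measure.map (Subtype.val : Θ → ℝ) ρ1 ((Subtype.val : Θ → ℝ) '' E) := by
    rw [Measure.map_apply valEmb.measurable hmE,
      Set.preimage_image_eq E Subtype.coe_injective]
  have h2 : ρ2 E = Measure.map (Subtype.val : Θ → ℝ) ρ2 ((Subtype.val : Θ → ℝ) '' E) := by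
    rw [Measure.map_apply valEmb.measurable hmE,
      Set.preimage_image_eq E Subtype.coe_injective]
  rw [h1, h2, h]

lemma map_rotTheta {s c : ℝ} (hs0 : 0 < s) (hs1 : s ≤ 1) (hc0 : 0 ≤ c) (hcs : c ≤ s) :
    Measure.map (fun w : Θ => pI (rotR s c (w:ℝ))) νΘ = νΘ := by
  have hrmeas : Measurable (rotR s c) :=
    measurable_rotR.comp (measurable_const.prodMk (measurable_const.prodMk measurable_id))
  have hmeas : Measurable (fun w : Θ => pI (rotR s c (w:ℝ))) :=
    (continuous_pI.measurable).comp (hrmeas.comp measurable_subtype_coe)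
  apply map_val_inj
  rw [Measure.map_map measurable_subtype_coe hmeas]
  have hfun : ((Subtype.val : Θ → ℝ) ∘ fun w : Θ => pI (rotR s c (w:ℝ)))
      = (rotR s c) ∘ (Subtype.val : Θ → ℝ) := by
    funext w
    exact pI_val (rotR_mem w.2.1 w.2.2 hc0 hcs hs1)
  rw [hfun, ← Measure.map_map hrmeas measurable_subtype_coe, map_val_νΘ,
    map_rotR_restrict hs0 hs1 hc0 hcs]

section MP
variable {F : ℝ → ℝ} {e : Θ ≃o Θ} {cf : ℝ → ℝ} {μF : Measure Θ}
  (he : ∀ θ : Θ, ((e θ : Θ) : ℝ) = F θ)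
  (hcf : ∀ s ∈ Icc (0:ℝ) 1, cf s ∈ Icc 0 s)
  (hmap : Measure.map (⇑e) μF = νΘ)
include he hcf hmap

lemma map_e_symm : Measure.map (⇑e.symm) νΘ = μF := by
  rw [← hmap, Measure.map_map (e.symm.continuous.measurable) (e.continuous.measurable)]
  have : (⇑e.symm ∘ ⇑e) = id := by funext x; simp
  rw [this, Measure.map_id]

lemma fibT_mp (m : Θ) : Measure.map (fibT e F cf m) μF = μF := by
  have hsmem := Fval_mem he m
  have hcm := hcf _ hsmem
  rcases eq_or_lt_of_le hsmem.1 with hs0 | hs0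
  · have hFm0 : F (m:ℝ) = 0 := hs0.symm
    have : fibT e F cf m = id := by
      funext v
      have hr : rotR (F (m:ℝ)) (cf (F (m:ℝ))) (F (v:ℝ)) = F (v:ℝ) :=
        rotR_of_ge (le_trans hFm0.le (Fval_nonneg he v))
      simp only [fibT, hr, pI_F he, e.symm_apply_apply, id]
    rw [this, Measure.map_id]
  · have hfuneq : fibT e F cf m
        = (⇑e.symm) ∘ (fun w : Θ => pI (rotR (F (m:ℝ)) (cf (F (m:ℝ))) (w:ℝ))) ∘ (⇑e) := by
      funext v
      simp only [fibT, Function.comp_apply, he v]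
    rw [hfuneq]
    have hrmeas : Measurable (fun w : Θ => pI (rotR (F (m:ℝ)) (cf (F (m:ℝ))) (w:ℝ))) := by
      exact (continuous_pI.measurable).comp
        ((measurable_rotR.comp (measurable_const.prodMk
          (measurable_const.prodMk measurable_id))).comp measurable_subtype_coe)
    rw [show ⇑e.symm ∘ (fun w : Θ => pI (rotR (F (m:ℝ)) (cf (F (m:ℝ))) (w:ℝ))) ∘ ⇑e
        = (⇑e.symm ∘ (fun w : Θ => pI (rotR (F (m:ℝ)) (cf (F (m:ℝ))) (w:ℝ)))) ∘ ⇑e from rfl,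
      ← Measure.map_map (e.symm.continuous.measurable.comp hrmeas) (e.continuous.measurable),
      hmap, ← Measure.map_map e.symm.continuous.measurable hrmeas,
      map_rotTheta hs0 hsmem.2 hcm.1 hcm.2, map_e_symm he hcf hmap]

lemma measurable_Fval : Measurable (fun θ : Θ => F (θ:ℝ)) := by
  have h1 : (fun θ : Θ => F (θ:ℝ)) = fun θ : Θ => ((e θ : Θ) : ℝ) :=
    funext fun θ => (he θ).symm
  rw [h1]; exact measurable_subtype_coe.comp e.continuous.measurable

lemma measurable_fibT_pair (hcfm : Measurable cf) :
    Measurable (Function.uncurry (fun m v : Θ => fibT e F cf m v)) := by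
  have hFvm := measurable_Fval he hcf hmap
  exact e.symm.continuous.measurable.comp (continuous_pI.measurable.comp
    (measurable_rotR.comp ((hFvm.comp measurable_fst).prodMk
      (((hcfm.comp (hFvm.comp measurable_fst))).prodMk (hFvm.comp measurable_snd)))))

lemma TG_mp [IsProbabilityMeasure μF] (hcfm : Measurable cf) :
    MeasurePreserving (TG e F cf) (μF.prod μF) (μF.prod μF) := by
  have hB : MeasurePreserving (fun p : Θ × Θ => (p.1, fibT e F cf p.1 p.2))
      (μF.prod μF) (μF.prod μF) :=
    MeasurePreserving.skew_product (MeasurePreserving.id μF)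
      (measurable_fibT_pair he hcf hmap hcfm)
      (Filter.Eventually.of_forall (fibT_mp he hcf hmap))
  have hA : MeasurePreserving (fun p : Θ × Θ => (fibT e F cf p.2 p.1, p.2))
      (μF.prod μF) (μF.prod μF) := by
    have hfun : (fun p : Θ × Θ => (fibT e F cf p.2 p.1, p.2))
        = Prod.swap ∘ (fun p : Θ × Θ => (p.1, fibT e F cf p.1 p.2)) ∘ Prod.swap := rfl
    rw [hfun]
    exact (Measure.measurePreserving_swap).comp (hB.comp (Measure.measurePreserving_swap))
  have hTG : TG e F cf = (fun p : Θ × Θ => (fibT e F cf p.2 p.1, p.2))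
      ∘ (fun p : Θ × Θ => (p.1, fibT e F cf p.1 p.2)) := by
    funext x
    obtain ⟨θ, θ'⟩ := x
    by_cases h : θ' ≤ θ
    · have h1 : fibT e F cf (fibT e F cf θ θ') θ = θ :=
        fibT_id_of_ge he hcf _ _ (fibT_le he hcf θ θ' h)
      simp only [TG, Function.comp_apply, if_pos h, h1]
    · have h1 : fibT e F cf θ θ' = θ' :=
        fibT_id_of_ge he hcf θ θ' (not_le.1 h).le
      simp only [TG, Function.comp_apply, if_neg h, h1]
  rw [hTG]
  exact hA.comp hB

lemma measurable_TG (hcfm : Measurable cf) : Measurable (TG e F cf) := by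
  have hfm := measurable_fibT_pair he hcf hmap hcfm
  unfold TG
  have hset : MeasurableSet {x : Θ × Θ | x.2 ≤ x.1} :=
    measurableSet_le measurable_snd measurable_fst
  exact Measurable.ite hset
    (measurable_fst.prodMk (hfm.comp (measurable_fst.prodMk measurable_snd)))
    ((hfm.comp (measurable_snd.prodMk measurable_fst)).prodMk measurable_snd)

lemma measurable_TG_family :
    Measurable (fun p : ℝ × (Θ × Θ) => TG e F (fun s => clamp01 p.1 * s) p.2) := by
  have hFvm := measurable_Fval he hcf hmap
  have hfib : Measurable (fun q : ℝ × Θ × Θ =>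
      fibT e F (fun s => clamp01 q.1 * s) q.2.1 q.2.2) := by
    apply e.symm.continuous.measurable.comp
    apply continuous_pI.measurable.comp
    exact measurable_rotR.comp ((hFvm.comp (measurable_fst.comp measurable_snd)).prodMk
      ((((measurable_clamp01.comp measurable_fst).mul
        (hFvm.comp (measurable_fst.comp measurable_snd)))).prodMk
        (hFvm.comp (measurable_snd.comp measurable_snd))))
  have hset : MeasurableSet {p : ℝ × (Θ × Θ) | p.2.2 ≤ p.2.1} :=
    measurableSet_le (measurable_snd.comp measurable_snd) (measurable_fst.comp measurable_snd)
  unfold TG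
  exact Measurable.ite hset
    ((measurable_fst.comp measurable_snd).prodMk (hfib.comp (measurable_fst.prodMk
      ((measurable_fst.comp measurable_snd).prodMk (measurable_snd.comp measurable_snd)))))
    ((hfib.comp (measurable_fst.prodMk
      ((measurable_snd.comp measurable_snd).prodMk
        (measurable_fst.comp measurable_snd)))).prodMk (measurable_snd.comp measurable_snd))

end MP

lemma intervalIntegrable_of_bounded_measurable {h : ℝ → ℝ} {C a b : ℝ}
    (hm : Measurable h) (hb : ∀ x, |h x| ≤ C) :
    IntervalIntegrable h volume a b := by
  rw [intervalIntegrable_iff]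
  exact Measure.integrableOn_of_bounded measure_Ioc_lt_top.ne hm.aestronglyMeasurable
    (Filter.Eventually.of_forall fun x => hb x)

def Finv0 (e : Θ ≃o Θ) (w : ℝ) : ℝ := ((e.symm (pI w) : Θ) : ℝ)

lemma continuous_Finv0 (e : Θ ≃o Θ) : Continuous (Finv0 e) :=
  continuous_subtype_val.comp (e.symm.continuous.comp continuous_pI)

lemma Finv0_mem (e : Θ ≃o Θ) (w : ℝ) : Finv0 e w ∈ Icc (0:ℝ) 1 := (e.symm (pI w)).2

section Avg
variable {f F : ℝ → ℝ} {e : Θ ≃o Θ}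
  (hf_cont : ContinuousOn f (Icc 0 1))
  (hF : ∀ θ : ℝ, F θ = ∫ z in (0:ℝ)..θ, f z)
  (hFc : ContinuousOn F (Icc 0 1))
  (hF0 : F 0 = 0)
  (hFmono : StrictMonoOn F (Icc 0 1))
  (he : ∀ θ : Θ, ((e θ : Θ) : ℝ) = F θ)

include he in
lemma Finv0_F (θ : Θ) : Finv0 e (F (θ:ℝ)) = (θ:ℝ) := by
  rw [Finv0, pI_F he, e.symm_apply_apply]

include hf_cont hF hFc hF0 hFmono he in
lemma avg_lemma {m v : Θ} (hvm : v < m) :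
    ∫⁻ u in Icc (0:ℝ) 1,
        ENNReal.ofReal ((fibT e F (fun s => clamp01 u * s) m v : Θ) : ℝ) ∂volume
      = ENNReal.ofReal ((m:ℝ) - (∫ z in (0:ℝ)..(m:ℝ), F z) / F (m:ℝ)) := by
  have hm1 : (m:ℝ) ≤ 1 := m.2.2
  have hv0 : (0:ℝ) ≤ (v:ℝ) := v.2.1
  have hm0 : (0:ℝ) < (m:ℝ) := lt_of_le_of_lt hv0 (Subtype.coe_lt_coe.2 hvm)
  set s := F ((m:ℝ)) with hs_def
  set a := F ((v:ℝ)) with ha_def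
  have hs0 : 0 < s := by
    have := hFmono ⟨le_refl 0, zero_le_one⟩ m.2 hm0
    rw [hF0] at this
    exact this
  have hs1 : s ≤ 1 := (Fval_mem he m).2
  have has : a < s := hFmono v.2 m.2 (Subtype.coe_lt_coe.2 hvm)
  have ha0 : 0 ≤ a := (Fval_mem he v).1
  -- the integrand as a real function
  set g : ℝ → ℝ := fun u => Finv0 e (rotR s (clamp01 u * s) a) with hg_def
  have hg_meas : Measurable g := by
    apply (continuous_Finv0 e).measurable.comp
    exact measurable_rotR.comp (measurable_const.prodMk
      ((measurable_clamp01.mul measurable_const).prodMk measurable_const))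
  have hg_mem : ∀ u, g u ∈ Icc (0:ℝ) 1 := fun u => Finv0_mem e _
  have hg_int : Integrable g (volume.restrict (Icc (0:ℝ) 1)) := by
    refine Integrable.mono (integrable_const (1:ℝ)) hg_meas.aestronglyMeasurable ?_
    refine Filter.Eventually.of_forall fun u => ?_
    rw [Real.norm_eq_abs, norm_one, abs_le]
    exact ⟨by linarith [(hg_mem u).1], (hg_mem u).2⟩
  have hcongr : (fun u => ENNReal.ofReal ((fibT e F (fun s => clamp01 u * s) m v : Θ) : ℝ))
      = fun u => ENNReal.ofReal (g u) := rfl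
  rw [hcongr, ← ofReal_integral_eq_lintegral_ofReal hg_int
    (Filter.Eventually.of_forall fun u => (hg_mem u).1)]
  congr 1
  -- now a real computation
  have h1 : ∫ u in Icc (0:ℝ) 1, g u ∂volume = ∫ u in (0:ℝ)..1, g u := by
    rw [MeasureTheory.integral_Icc_eq_integral_Ioc,
      ← intervalIntegral.integral_of_le zero_le_one]
  rw [h1]
  set h : ℝ → ℝ := fun u => Finv0 e (rotR s (u * s) a) with hh_def
  have hgh : ∫ u in (0:ℝ)..1, g u = ∫ u in (0:ℝ)..1, h u := by
    apply intervalIntegral.integral_congr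
    intro u hu
    rw [uIcc_of_le zero_le_one] at hu
    simp only [hg_def, hh_def, clamp01_of_mem hu]
  rw [hgh]
  have hh_meas : Measurable h := by
    apply (continuous_Finv0 e).measurable.comp
    exact measurable_rotR.comp (measurable_const.prodMk
      ((measurable_id.mul measurable_const).prodMk measurable_const))
  have hh_bdd : ∀ x, |h x| ≤ 1 := by
    intro x
    rw [abs_le]
    exact ⟨by linarith [(Finv0_mem e (rotR s (x * s) a)).1], (Finv0_mem e _).2⟩
  set t := (s - a) / s with ht_def
  have ht0 : 0 < t := div_pos (by linarith) hs0
  have ht1 : t ≤ 1 := by rw [ht_def, div_le_one hs0]; linarith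
  have hsplit : ∫ u in (0:ℝ)..1, h u = (∫ u in (0:ℝ)..t, h u) + ∫ u in t..1, h u :=
    (intervalIntegral.integral_add_adjacent_intervals
      (intervalIntegrable_of_bounded_measurable hh_meas hh_bdd)
      (intervalIntegrable_of_bounded_measurable hh_meas hh_bdd)).symm
  have hp1 : ∫ u in (0:ℝ)..t, h u = s⁻¹ • ∫ w in a..s, Finv0 e w := by
    have e1 : ∫ u in (0:ℝ)..t, h u = ∫ u in (0:ℝ)..t, Finv0 e (s * u + a) := by
      apply intervalIntegral.integral_congr_ae
      have hne : ∀ᵐ x ∂(volume : Measure ℝ), x ≠ t := by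
        rw [Filter.eventually_iff, mem_ae_iff]
        simp only [ne_eq, compl_setOf, not_not, setOf_eq_eq_singleton]
        exact measure_singleton t
      filter_upwards [hne] with u hu hmem
      rw [uIoc_of_le ht0.le] at hmem
      have hult : u < t := lt_of_le_of_ne hmem.2 hu
      have h2 : a + u * s < s := by
        have : u * s < t * s := by
          apply mul_lt_mul_of_pos_right hult hs0
        rw [ht_def, div_mul_cancel₀ _ hs0.ne'] at this
        linarith
      simp only [hh_def, rotR, if_pos has, if_pos h2]
      ring_nf
    rw [e1, intervalIntegral.integral_comp_mul_add (Finv0 e) hs0.ne' a]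
    rw [show s * 0 + a = a by ring, show s * t + a = s by rw [ht_def]; field_simp; ring]
  have hp2 : ∫ u in t..1, h u = s⁻¹ • ∫ w in (0:ℝ)..a, Finv0 e w := by
    have e1 : ∫ u in t..1, h u = ∫ u in t..1, Finv0 e (s * u + (a - s)) := by
      apply intervalIntegral.integral_congr_ae
      refine Filter.Eventually.of_forall fun u hmem => ?_
      rw [uIoc_of_le ht1] at hmem
      have hult : t < u := hmem.1
      have h2 : ¬ (a + u * s < s) := by
        push_neg
        have : t * s ≤ u * s := mul_le_mul_of_nonneg_right hult.le hs0.le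
        rw [ht_def, div_mul_cancel₀ _ hs0.ne'] at this
        linarith
      simp only [hh_def, rotR, if_pos has, if_neg h2]
      ring_nf
    rw [e1, intervalIntegral.integral_comp_mul_add (Finv0 e) hs0.ne' (a - s)]
    rw [show s * t + (a - s) = 0 by rw [ht_def]; field_simp; ring, show s * 1 + (a - s) = a by ring]
  have hFinv_int : ∀ p q : ℝ, IntervalIntegrable (Finv0 e) volume p q :=
    fun p q => (continuous_Finv0 e).intervalIntegrable p q
  have hsum : (∫ u in (0:ℝ)..t, h u) + ∫ u in t..1, h u
      = s⁻¹ • ∫ w in (0:ℝ)..s, Finv0 e w := by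
    rw [hp1, hp2, ← smul_add, add_comm,
      intervalIntegral.integral_add_adjacent_intervals (hFinv_int 0 a) (hFinv_int a s)]
  rw [hsplit, hsum]
  -- change of variables: ∫_0^s Finv0 = ∫_0^m f x * x
  have hFderiv : ∀ x ∈ Ioo (0:ℝ) ((m:ℝ)), HasDerivAt F (f x) x := by
    intro x hx
    have hx1 : x < 1 := lt_of_lt_of_le hx.2 hm1
    have hnhds : Icc (0:ℝ) 1 ∈ nhds x := Icc_mem_nhds hx.1 hx1
    have hcx : ContinuousAt f x := hf_cont.continuousAt hnhds
    have hFfun : F = fun θ => ∫ z in (0:ℝ)..θ, f z := funext hF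
    rw [hFfun]
    exact intervalIntegral.integral_hasDerivAt_right
      ((hf_cont.mono (by intro y hy; rw [uIcc_of_le (hx.1.le : (0:ℝ) ≤ x)] at hy
                         exact ⟨hy.1, le_trans hy.2 hx1.le⟩)).intervalIntegrable)
      (ContinuousOn.stronglyMeasurableAtFilter isOpen_Ioo
        (hf_cont.mono Ioo_subset_Icc_self) x ⟨hx.1, hx1⟩)
      hcx
  have hsubm : Icc (0:ℝ) ((m:ℝ)) ⊆ Icc (0:ℝ) 1 := Icc_subset_Icc le_rfl hm1
  have huIcc : uIcc (0:ℝ) ((m:ℝ)) = Icc (0:ℝ) ((m:ℝ)) := uIcc_of_le hm0.le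
  have hFcm : ContinuousOn F (uIcc (0:ℝ) ((m:ℝ))) := by rw [huIcc]; exact hFc.mono hsubm
  have hfcm : ContinuousOn f (uIcc (0:ℝ) ((m:ℝ))) := by rw [huIcc]; exact hf_cont.mono hsubm
  have hcv : ∫ x in (0:ℝ)..((m:ℝ)), f x • (Finv0 e ∘ F) x
      = ∫ w in (F 0)..(F ((m:ℝ))), Finv0 e w := by
    apply intervalIntegral.integral_comp_smul_deriv'' hFcm ?_ hfcm
      (continuous_Finv0 e).continuousOn
    intro x hx
    rw [inf_of_le_left hm0.le, sup_of_le_right hm0.le] at hx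
    exact (hFderiv x hx).hasDerivWithinAt
  have hcv2 : ∫ x in (0:ℝ)..((m:ℝ)), f x • (Finv0 e ∘ F) x
      = ∫ x in (0:ℝ)..((m:ℝ)), x * f x := by
    apply intervalIntegral.integral_congr
    intro x hx
    rw [huIcc] at hx
    have : Finv0 e (F x) = x := Finv0_F he ⟨x, hsubm hx⟩
    simp only [Function.comp_apply, this, smul_eq_mul]
    ring
  have hint1 : IntervalIntegrable F volume 0 ((m:ℝ)) := hFcm.intervalIntegrable
  have hint2 : IntervalIntegrable (fun x => x * f x) volume 0 ((m:ℝ)) :=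
    (continuousOn_id.mul hfcm).intervalIntegrable
  have hparts : (∫ x in (0:ℝ)..((m:ℝ)), (F x + x * f x))
      = (m:ℝ) * s - 0 * F 0 := by
    refine intervalIntegral.integral_eq_sub_of_hasDeriv_right_of_le
      (f := fun z => z * F z) (f' := fun x => F x + x * f x) hm0.le
      (continuousOn_id.mul (by rw [← huIcc]; exact hFcm)) ?_ (hint1.add hint2)
    intro x hx
    have h := ((hasDerivAt_id x).mul (hFderiv x hx)).hasDerivWithinAt (s := Ioi x)
    convert h using 1
    show F x + x * f x = 1 * F x + x * f x
    ring
    rfl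
  have hzfz : ∫ x in (0:ℝ)..((m:ℝ)), x * f x
      = (m:ℝ) * s - ∫ z in (0:ℝ)..((m:ℝ)), F z := by
    have h2 := hparts
    rw [intervalIntegral.integral_add hint1 hint2] at h2
    have h3 : (0:ℝ) * F 0 = 0 := by ring
    linarith [h2, h3]
  have h' : ∫ w in (F 0)..(F ((m:ℝ))), Finv0 e w = ∫ x in (0:ℝ)..((m:ℝ)), x * f x :=
    hcv.symm.trans hcv2
  rw [hF0, ← hs_def] at h'
  rw [h', hzfz, smul_eq_mul]
  field_simp
end Avg

theorem stmt3
    (f : ℝ → ℝ)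
    (hf_cont : ContinuousOn f (Set.Icc 0 1))
    (hf_pos : ∀ z ∈ Set.Icc (0:ℝ) 1, 0 < f z)
    (F : ℝ → ℝ) (hF : ∀ θ : ℝ, F θ = ∫ z in (0:ℝ)..θ, f z)
    (hF1 : F 1 = 1)
    -- μF is the probability measure on [0,1] associated with the cdf F
    (μF : Measure Θ) [IsProbabilityMeasure μF]
    (hμF : ∀ c : Θ, μF {x : Θ | x ≤ c} = ENNReal.ofReal (F (c : ℝ)))
    (P : Measure (Θ × Θ)) (hP : P = μF.prod μF)
    (𝒬 : Set (Measure (Θ × Θ)))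
    (hP𝒬 : P ∈ 𝒬)
    (h𝒬 : ∀ Q ∈ 𝒬, IsProbabilityMeasure Q ∧ Q ≪ P)
    -- rearrangement invariance of 𝒬
    (hinv : ∀ Q ∈ 𝒬, ∀ Q' : Measure (Θ × Θ), IsProbabilityMeasure Q' → Q' ≪ P →
      IsRearrangement P Q Q' → Q' ∈ 𝒬)
    -- first-price equilibrium bid
    (bI : ℝ → ℝ)
    (hbI : ∀ θ : ℝ, 0 < θ → bI θ = θ - (∫ z in (0:ℝ)..θ, F z) / F θ)
    (hbI0 : bI 0 = 0)
    -- first-price and second-price transfer functions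
    (tI tII : Θ → Θ → ℝ)
    (htI : ∀ θ θ' : Θ, tI θ θ' =
      bI (θ : ℝ) * ((if θ' < θ then (1:ℝ) else 0) + (if θ = θ' then 1/2 else 0)))
    (htII : ∀ θ θ' : Θ, tII θ θ' =
      (θ' : ℝ) * ((if θ' < θ then (1:ℝ) else 0) + (if θ = θ' then 1/2 else 0))) :
    (⨅ Q ∈ 𝒬, ∫⁻ x : Θ × Θ, ENNReal.ofReal (tII x.1 x.2 + tII x.2 x.1) ∂Q)
      ≤ ⨅ Q ∈ 𝒬, ∫⁻ x : Θ × Θ, ENNReal.ofReal (tI x.1 x.2 + tI x.2 x.1) ∂Q := by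
  classical
  -- basic properties of F
  have hF0 : F 0 = 0 := by rw [hF]; exact intervalIntegral.integral_same
  have hf_int : ∀ {p q : ℝ}, p ∈ Icc (0:ℝ) 1 → q ∈ Icc (0:ℝ) 1 →
      IntervalIntegrable f volume p q := by
    intro p q hp hq
    refine (hf_cont.mono ?_).intervalIntegrable
    intro y hy
    rcases le_total p q with h | h
    · rw [uIcc_of_le h] at hy; exact ⟨le_trans hp.1 hy.1, le_trans hy.2 hq.2⟩
    · rw [uIcc_of_ge h] at hy; exact ⟨le_trans hq.1 hy.1, le_trans hy.2 hp.2⟩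
  have hFc : ContinuousOn F (Icc 0 1) := by
    have h0 : ContinuousOn (fun x => ∫ t in (0:ℝ)..x, f t) (uIcc (0:ℝ) 1) :=
      intervalIntegral.continuousOn_primitive_interval
        (by rw [uIcc_of_le zero_le_one]; exact hf_cont.integrableOn_Icc)
    rw [uIcc_of_le zero_le_one] at h0
    exact h0.congr fun x _ => hF x
  have hFmono : StrictMonoOn F (Icc 0 1) := by
    intro x hx y hy hxy
    have hsub : F y - F x = ∫ z in x..y, f z := by
      rw [hF, hF]
      exact intervalIntegral.integral_interval_sub_left (hf_int (left_mem_Icc.2 zero_le_one) hy)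
        (hf_int (left_mem_Icc.2 zero_le_one) hx)
    have hpos : 0 < ∫ z in x..y, f z :=
      intervalIntegral.intervalIntegral_pos_of_pos_on (hf_int hx hy)
        (fun z hz => hf_pos z ⟨le_trans hx.1 hz.1.le, le_trans hz.2.le hy.2⟩) hxy
    linarith
  have hFmem : ∀ θ : Θ, F (θ:ℝ) ∈ Icc (0:ℝ) 1 := by
    intro θ
    constructor
    · have h1 := hFmono.monotoneOn ⟨le_refl 0, zero_le_one⟩ θ.2 θ.2.1
      rw [hF0] at h1; exact h1
    · have h1 := hFmono.monotoneOn θ.2 ⟨zero_le_one, le_refl 1⟩ θ.2.2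
      rw [hF1] at h1; exact h1
  -- the order isomorphism induced by F
  obtain ⟨e, he⟩ : ∃ e : Θ ≃o Θ, ∀ θ : Θ, ((e θ : Θ) : ℝ) = F θ := by
    have hstrict : StrictMono (fun θ : Θ => (⟨F (θ:ℝ), hFmem θ⟩ : Θ)) := by
      intro p q hpq
      exact Subtype.mk_lt_mk.2 (hFmono p.2 q.2 (Subtype.coe_lt_coe.2 hpq))
    have hsurj : Function.Surjective (fun θ : Θ => (⟨F (θ:ℝ), hFmem θ⟩ : Θ)) := by
      intro y
      have h1 : (y:ℝ) ∈ Icc (F 0) (F 1) := by rw [hF0, hF1]; exact y.2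
      obtain ⟨x, hx, hFx⟩ := intermediate_value_Icc zero_le_one hFc h1
      exact ⟨⟨x, hx⟩, Subtype.ext hFx⟩
    exact ⟨StrictMono.orderIsoOfSurjective _ hstrict hsurj, fun θ => rfl⟩
  -- the pushforward of μF under e is the uniform measure νΘ
  haveI : IsProbabilityMeasure (Measure.map (⇑e) μF) :=
    Measure.isProbabilityMeasure_map e.continuous.measurable.aemeasurable
  have hmap : Measure.map (⇑e) μF = νΘ := by
    apply Measure.ext_of_Iic
    intro b
    rw [Measure.map_apply e.continuous.measurable measurableSet_Iic]
    have hpre : ⇑e ⁻¹' Iic b = Iic (e.symm b) := by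
      ext θ
      simp only [mem_preimage, mem_Iic]
      exact ⟨fun hh => e.le_symm_apply.2 hh, fun hh => e.le_symm_apply.1 hh⟩
    rw [hpre]
    have h1 : μF (Iic (e.symm b)) = ENNReal.ofReal (F ((e.symm b : Θ) : ℝ)) := hμF (e.symm b)
    have h2 : F ((e.symm b : Θ) : ℝ) = (b:ℝ) := by rw [← he (e.symm b), e.apply_symm_apply]
    rw [h1, h2, νΘ, valEmb.comap_apply]
    have himg : (Subtype.val : Θ → ℝ) '' Iic b = Icc 0 (b:ℝ) := by
      ext x
      constructor
      · rintro ⟨y, hy, rfl⟩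
        exact ⟨y.2.1, Subtype.coe_le_coe.2 hy⟩
      · intro hx
        refine ⟨⟨x, ⟨hx.1, le_trans hx.2 b.2.2⟩⟩, ?_, rfl⟩
        rw [mem_Iic]
        exact Subtype.coe_le_coe.1 hx.2
    rw [himg, Real.volume_Icc, sub_zero]
  -- μF has no atoms
  have hatom : ∀ pt : Θ, μF {pt} = 0 := by
    intro pt
    have hcf0 : ∀ s ∈ Icc (0:ℝ) 1, (fun _ : ℝ => (0:ℝ)) s ∈ Icc 0 s :=
      fun s hs => ⟨le_refl 0, hs.1⟩
    have hμFeq : μF = Measure.map (⇑e.symm) νΘ := (map_e_symm he hcf0 hmap).symm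
    rw [hμFeq, Measure.map_apply e.symm.continuous.measurable (measurableSet_singleton pt)]
    have hpre : ⇑e.symm ⁻¹' {pt} = {e pt} := by
      ext x
      simp only [mem_preimage, mem_singleton_iff]
      exact ⟨fun hh => by rw [← hh, e.apply_symm_apply], fun hh => by rw [hh, e.symm_apply_apply]⟩
    rw [hpre, νΘ, valEmb.comap_apply, image_singleton, Real.volume_singleton]
  haveI hPprob : IsProbabilityMeasure P := by rw [hP]; infer_instance
  -- the diagonal is P-null
  have hdm : MeasurableSet {x : Θ × Θ | x.1 = x.2} := by
    have : {x : Θ × Θ | x.1 = x.2} = {x : Θ × Θ | ((x.1 : ℝ)) = ((x.2 : ℝ))} := by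
      ext x; exact ⟨fun hh => by rw [mem_setOf] at hh ⊢; rw [hh], fun hh => Subtype.ext hh⟩
    rw [this]
    exact measurableSet_eq_fun (measurable_subtype_coe.comp measurable_fst)
      (measurable_subtype_coe.comp measurable_snd)
  have hPdiag : P {x : Θ × Θ | x.1 = x.2} = 0 := by
    rw [hP, Measure.prod_apply hdm]
    have hsec : ∀ θ : Θ, (Prod.mk θ ⁻¹' {x : Θ × Θ | x.1 = x.2}) = {θ} := by
      intro θ; ext y
      simp only [mem_preimage, mem_setOf_eq, mem_singleton_iff, eq_comm]
    have : ∫⁻ θ, μF (Prod.mk θ ⁻¹' {x : Θ × Θ | x.1 = x.2}) ∂μF = ∫⁻ _ : Θ, 0 ∂μF :=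
      lintegral_congr fun θ => by rw [hsec θ, hatom]
    rw [this, lintegral_zero]
  -- pointwise identities for the total transfers
  have htIIsum : ∀ x : Θ × Θ, tII x.1 x.2 + tII x.2 x.1 = min ((x.1:Θ):ℝ) ((x.2:Θ):ℝ) := by
    intro x
    rcases lt_trichotomy x.1 x.2 with h | h | h
    · rw [htII x.1 x.2, htII x.2 x.1, if_neg (asymm h), if_neg h.ne, if_pos h, if_neg h.ne',
        min_eq_left (Subtype.coe_le_coe.2 h.le)]
      ring
    · have hv : ((x.1:Θ):ℝ) = ((x.2:Θ):ℝ) := by rw [h]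
      rw [htII x.1 x.2, htII x.2 x.1, if_neg (by rw [h]; exact lt_irrefl x.2), if_pos h,
        if_neg (by rw [h]; exact lt_irrefl x.2), if_pos h.symm, hv, min_self]
      ring
    · rw [htII x.1 x.2, htII x.2 x.1, if_pos h, if_neg h.ne', if_neg (asymm h), if_neg h.ne,
        min_eq_right (Subtype.coe_le_coe.2 h.le)]
      ring
  have htIsum : ∀ x : Θ × Θ, tI x.1 x.2 + tI x.2 x.1 = bI (max ((x.1:Θ):ℝ) ((x.2:Θ):ℝ)) := by
    intro x
    rcases lt_trichotomy x.1 x.2 with h | h | h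
    · rw [htI x.1 x.2, htI x.2 x.1, if_neg (asymm h), if_neg h.ne, if_pos h, if_neg h.ne',
        max_eq_right (Subtype.coe_le_coe.2 h.le)]
      ring
    · have hv : ((x.1:Θ):ℝ) = ((x.2:Θ):ℝ) := by rw [h]
      rw [htI x.1 x.2, htI x.2 x.1, if_neg (by rw [h]; exact lt_irrefl x.2), if_pos h,
        if_neg (by rw [h]; exact lt_irrefl x.2), if_pos h.symm, hv, max_self]
      ring
    · rw [htI x.1 x.2, htI x.2 x.1, if_pos h, if_neg h.ne', if_neg (asymm h), if_neg h.ne,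
        max_eq_left (Subtype.coe_le_coe.2 h.le)]
      ring
  -- main argument
  refine le_iInf₂ fun Q hQ => ?_
  haveI hQprob : IsProbabilityMeasure Q := (h𝒬 Q hQ).1
  have hQP : Q ≪ P := (h𝒬 Q hQ).2
  set φ : Θ × Θ → ENNReal := Q.rnDeriv P with hφ_def
  have hφm : Measurable φ := Measure.measurable_rnDeriv Q P
  haveI : SFinite Q := inferInstance
  haveI : SigmaFinite P := inferInstance
  have hQwd : P.withDensity φ = Q := Measure.withDensity_rnDeriv_eq Q P hQP
  have hφlt : ∀ᵐ x ∂P, φ x < ⊤ := Measure.rnDeriv_lt_top Q P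
  set κ : Measure ℝ := volume.restrict (Icc (0:ℝ) 1) with hκ_def
  haveI hκprob : IsProbabilityMeasure κ := ⟨by rw [hκ_def, Measure.restrict_apply_univ, Real.volume_Icc]; norm_num⟩
  -- the rotation families
  set cf1 : ℝ → ℝ → ℝ := fun u s => clamp01 u * s with hcf1_def
  set cf2 : ℝ → ℝ → ℝ := fun u s => s - clamp01 u * s with hcf2_def
  have hcf1 : ∀ u, ∀ s ∈ Icc (0:ℝ) 1, cf1 u s ∈ Icc 0 s := by
    intro u s hs
    simp only [hcf1_def]
    constructor
    · exact mul_nonneg (clamp01_mem u).1 hs.1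
    · calc clamp01 u * s ≤ 1 * s := mul_le_mul_of_nonneg_right (clamp01_mem u).2 hs.1
        _ = s := one_mul s
  have hcf2 : ∀ u, ∀ s ∈ Icc (0:ℝ) 1, cf2 u s ∈ Icc 0 s := by
    intro u s hs
    have h1 := hcf1 u s hs
    simp only [hcf1_def] at h1
    simp only [hcf2_def]
    exact ⟨by linarith [h1.2], by linarith [h1.1]⟩
  have hcf21 : ∀ u s, cf2 u s = s - cf1 u s := fun u s => rfl
  set Tu : ℝ → Θ × Θ → Θ × Θ := fun u => TG e F (cf1 u) with hTu_def
  set Su : ℝ → Θ × Θ → Θ × Θ := fun u => TG e F (cf2 u) with hSu_def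
  have hTmp : ∀ u, MeasurePreserving (Tu u) P P := by
    intro u
    rw [hP]
    exact TG_mp he (hcf1 u) hmap (measurable_const.mul measurable_id)
  have hSmp : ∀ u, MeasurePreserving (Su u) P P := by
    intro u
    rw [hP]
    exact TG_mp he (hcf2 u) hmap
      (by simp only [hcf2_def]; exact measurable_id.sub (measurable_id.const_mul _))
  have hST : ∀ u x, Su u (Tu u x) = x := fun u x => TG_comp he (hcf1 u) (hcf21 u) x
  have hTum : ∀ u, Measurable (Tu u) :=
    fun u => measurable_TG he (hcf1 u) hmap (measurable_const.mul measurable_id)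
  have hSum : ∀ u, Measurable (Su u) :=
    fun u => measurable_TG he (hcf2 u) hmap
      (by simp only [hcf2_def]; exact measurable_id.sub (measurable_id.const_mul _))
  -- the image measures
  have hQu_eq : ∀ u, Measure.map (Tu u) Q = P.withDensity (fun y => φ (Su u y)) := by
    intro u
    ext E hE
    rw [Measure.map_apply (hTum u) hE, ← hQwd, withDensity_apply _ ((hTum u) hE),
      withDensity_apply _ hE, ← lintegral_indicator ((hTum u) hE) _, ← lintegral_indicator hE _,
      ← (hTmp u).lintegral_comp (f := E.indicator fun y => φ (Su u y))
        ((hφm.comp (hSum u)).indicator hE)]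
    apply lintegral_congr
    intro x
    by_cases hx : Tu u x ∈ E
    · rw [indicator_of_mem hx, indicator_of_mem (by exact hx), hST u x]
    · rw [indicator_of_notMem hx, indicator_of_notMem (by exact hx)]
  have hQu_prob : ∀ u, IsProbabilityMeasure (Measure.map (Tu u) Q) :=
    fun u => Measure.isProbabilityMeasure_map (hTum u).aemeasurable
  have hQu_ac : ∀ u, Measure.map (Tu u) Q ≪ P := by
    intro u
    rw [hQu_eq u]
    exact withDensity_absolutelyContinuous _ _
  have hQu_rearr : ∀ u, IsRearrangement P Q (Measure.map (Tu u) Q) := by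
    intro u c
    have hQu_rd : (Measure.map (Tu u) Q).rnDeriv P =ᵐ[P] fun y => φ (Su u y) := by
      rw [hQu_eq u]
      exact Measure.rnDeriv_withDensity P (hφm.comp (hSum u))
    have h1 : P {ω | (Measure.map (Tu u) Q).rnDeriv P ω ≤ c} = P {ω | φ (Su u ω) ≤ c} := by
      apply measure_congr
      apply Filter.eventuallyEq_set.2
      filter_upwards [hQu_rd] with ω hω
      rw [hω]
    have h2 : P {ω | φ (Su u ω) ≤ c} = P {ω | φ ω ≤ c} := by
      have hpre : {ω | φ (Su u ω) ≤ c} = (Su u) ⁻¹' {ω | φ ω ≤ c} := rfl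
      rw [hpre, ← Measure.map_apply (hSum u)
        (show MeasurableSet {ω : Θ × Θ | φ ω ≤ c} from hφm measurableSet_Iic),
        (hSmp u).map_eq]
    rw [h1, h2]
  -- the second-price payoff
  set gII : Θ × Θ → ENNReal := fun x => ENNReal.ofReal (min ((x.1:Θ):ℝ) ((x.2:Θ):ℝ))
    with hgII_def
  have hgIIm : Measurable gII :=
    ENNReal.measurable_ofReal.comp ((measurable_subtype_coe.comp measurable_fst).min
      (measurable_subtype_coe.comp measurable_snd))
  have hTufam : Measurable (fun p : ℝ × (Θ × Θ) => Tu p.1 p.2) :=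
    measurable_TG_family he (hcf1 0) hmap
  have hjoint : Measurable (fun p : ℝ × (Θ × Θ) => φ p.2 * gII (Tu p.1 p.2)) :=
    (hφm.comp measurable_snd).mul (hgIIm.comp hTufam)
  set H : ℝ → ENNReal := fun u => ∫⁻ x, φ x * gII (Tu u x) ∂P with hH_def
  have hHm : Measurable H := Measurable.lintegral_prod_right' hjoint
  -- identification of the second-price revenue under the image measures
  have hIIQu : ∀ u, (∫⁻ x : Θ × Θ, ENNReal.ofReal (tII x.1 x.2 + tII x.2 x.1)
      ∂(Measure.map (Tu u) Q)) = H u := by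
    intro u
    have e1 : (∫⁻ x : Θ × Θ, ENNReal.ofReal (tII x.1 x.2 + tII x.2 x.1)
        ∂(Measure.map (Tu u) Q)) = ∫⁻ x, gII x ∂(Measure.map (Tu u) Q) :=
      lintegral_congr fun x => by rw [hgII_def, htIIsum x]
    rw [e1, lintegral_map hgIIm (hTum u), ← hQwd,
      lintegral_withDensity_eq_lintegral_mul_non_measurable P hφm hφlt]
    rfl
  -- the averaged identity
  set Cval : ENNReal := ∫⁻ x, φ x * ENNReal.ofReal (bI (max ((x.1:Θ):ℝ) ((x.2:Θ):ℝ))) ∂P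
    with hCval_def
  have hgu_meas : ∀ x : Θ × Θ, Measurable fun u => gII (Tu u x) :=
    fun x => (hgIIm.comp hTufam).comp (measurable_id.prodMk measurable_const)
  have hae : ∀ᵐ x ∂P, (∫⁻ u, gII (Tu u x) ∂κ)
      = ENNReal.ofReal (bI (max ((x.1:Θ):ℝ) ((x.2:Θ):ℝ))) := by
    have hdiag_ae : ∀ᵐ x ∂P, x.1 ≠ x.2 := by
      rw [ae_iff]
      have : {x : Θ × Θ | ¬ x.1 ≠ x.2} = {x : Θ × Θ | x.1 = x.2} := by
        ext x; simp
      rw [this]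
      exact hPdiag
    filter_upwards [hdiag_ae] with x hx
    rcases hx.lt_or_gt with h | h
    · -- x.1 < x.2 : the maximum is x.2
      have hcongr : ∀ u, gII (Tu u x) = ENNReal.ofReal
          ((fibT e F (fun s => clamp01 u * s) x.2 x.1 : Θ) : ℝ) := by
        intro u
        have hb : ¬ (x.2 ≤ x.1) := not_le.2 h
        have hfle : fibT e F (cf1 u) x.2 x.1 ≤ x.2 := fibT_le he (hcf1 u) x.2 x.1 h.le
        simp only [hTu_def, TG, if_neg hb, hgII_def]
        rw [min_eq_left (Subtype.coe_le_coe.2 hfle)]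
      have havg := avg_lemma hf_cont hF hFc hF0 hFmono he h
      rw [lintegral_congr hcongr, hκ_def, havg, max_eq_right (Subtype.coe_le_coe.2 h.le),
        hbI ((x.2:Θ):ℝ) (lt_of_le_of_lt x.1.2.1 (Subtype.coe_lt_coe.2 h))]
    · -- x.2 < x.1 : the maximum is x.1
      have hcongr : ∀ u, gII (Tu u x) = ENNReal.ofReal
          ((fibT e F (fun s => clamp01 u * s) x.1 x.2 : Θ) : ℝ) := by
        intro u
        have hfle : fibT e F (cf1 u) x.1 x.2 ≤ x.1 := fibT_le he (hcf1 u) x.1 x.2 h.le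
        simp only [hTu_def, TG, if_pos h.le, hgII_def]
        rw [min_eq_right (Subtype.coe_le_coe.2 hfle)]
      have havg := avg_lemma hf_cont hF hFc hF0 hFmono he h
      rw [lintegral_congr hcongr, hκ_def, havg, max_eq_left (Subtype.coe_le_coe.2 h.le),
        hbI ((x.1:Θ):ℝ) (lt_of_le_of_lt x.2.2.1 (Subtype.coe_lt_coe.2 h))]
  have havgH : ∫⁻ u, H u ∂κ = Cval := by
    simp only [hH_def]
    rw [lintegral_lintegral_swap hjoint.aemeasurable, hCval_def]
    apply lintegral_congr_ae
    filter_upwards [hae] with x hx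
    rw [lintegral_const_mul (φ x) (hgu_meas x), hx]
  -- the first-price revenue
  have hCI : (∫⁻ x : Θ × Θ, ENNReal.ofReal (tI x.1 x.2 + tI x.2 x.1) ∂Q) = Cval := by
    have e1 : (∫⁻ x : Θ × Θ, ENNReal.ofReal (tI x.1 x.2 + tI x.2 x.1) ∂Q)
        = ∫⁻ x, ENNReal.ofReal (bI (max ((x.1:Θ):ℝ) ((x.2:Θ):ℝ))) ∂Q :=
      lintegral_congr fun x => by rw [htIsum x]
    rw [e1, ← hQwd, lintegral_withDensity_eq_lintegral_mul_non_measurable P hφm hφlt]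
    rfl
  -- pick a good rotation parameter
  have hexists : ∃ u, H u ≤ Cval := by
    by_contra hcon
    push_neg at hcon
    rcases eq_or_ne Cval ⊤ with hC | hC
    · exact absurd (hC ▸ hcon 0) not_top_lt
    · have hle : (fun _ : ℝ => Cval) ≤ᵐ[κ] H := Filter.Eventually.of_forall fun u => (hcon u).le
      have hconst : ∫⁻ _, Cval ∂κ = Cval := by
        rw [lintegral_const, measure_univ, mul_one]
      have heq : (fun _ : ℝ => Cval) =ᵐ[κ] H := by
        apply ae_eq_of_ae_le_of_lintegral_le hle (by rw [hconst]; exact hC) hHm.aemeasurable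
        rw [hconst, havgH]
      have hfalse : ∀ᵐ u ∂κ, False := by
        filter_upwards [heq] with u hu
        exact absurd (hu ▸ hcon u) (lt_irrefl _)
      obtain ⟨u, hu⟩ := hfalse.exists
      exact hu
  obtain ⟨u₀, hu₀⟩ := hexists
  have hmem : Measure.map (Tu u₀) Q ∈ 𝒬 :=
    hinv Q hQ _ (hQu_prob u₀) (hQu_ac u₀) (hQu_rearr u₀)
  calc (⨅ Q' ∈ 𝒬, ∫⁻ x : Θ × Θ, ENNReal.ofReal (tII x.1 x.2 + tII x.2 x.1) ∂Q')
      ≤ ∫⁻ x : Θ × Θ, ENNReal.ofReal (tII x.1 x.2 + tII x.2 x.1) ∂(Measure.map (Tu u₀) Q) :=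
        iInf₂_le _ hmem
    _ = H u₀ := hIIQu u₀
    _ ≤ Cval := hu₀
    _ = ∫⁻ x : Θ × Θ, ENNReal.ofReal (tI x.1 x.2 + tI x.2 x.1) ∂Q := hCI.symm

end
end

section
/- Let P = P₁ ⊗ P₂ be a product probability measure on Θ² = [0,1]×[0,1]. Let U ⊆ Θ² be a measurable upper set, i.e., θ_L ≤ θ_H, θ'_L ≤ θ'_H and (θ_L,θ'_L) ∈ U imply (θ_H,θ'_H) ∈ U. Let A₁, A₂ ⊆ Θ be measurable sets with P(A₁×A₂) > 0, and let A*₁, A*₂ ⊆ Θ be intervals with left endpoint 0 satisfying P₁(A*₁) = P₁(A₁) and P₂(A*₂) = P₂(A₂). Then P(U ∩ (A*₁ × A*₂)) ≤ P(U ∩ (A₁ × A₂)). -/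
open MeasureTheory
open scoped ENNReal

noncomputable section

lemma key_lemma (P : Measure Θ) [IsProbabilityMeasure P] (f : Θ → ℝ≥0∞)
    (hf : Monotone f) (A A' : Set Θ) (hA : MeasurableSet A)
    (hc : ∃ c : Θ, A' = Set.Iic c ∨ A' = Set.Iio c) (heq : P A' = P A) :
    ∫⁻ x in A', f x ∂P ≤ ∫⁻ x in A, f x ∂P := by
  obtain ⟨c, hc⟩ := hc
  have hA'm : MeasurableSet A' := by
    rcases hc with h | h <;> subst h
    · exact measurableSet_Iic
    · exact measurableSet_Iio
  have hle : ∀ x ∈ A' \ A, f x ≤ f c := by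
    intro x hx
    rcases hc with h | h <;> subst h
    · exact hf hx.1
    · exact hf (le_of_lt hx.1)
  have hge : ∀ y ∈ A \ A', f c ≤ f y := by
    intro y hy
    rcases hc with h | h <;> subst h
    · exact hf (le_of_lt (lt_of_not_ge hy.2))
    · exact hf (le_of_not_gt hy.2)
  have hmeq : P (A' \ A) = P (A \ A') := by
    have h1 : P (A' ∩ A) + P (A' \ A) = P A' := measure_inter_add_diff A' hA
    have h2 : P (A' ∩ A) + P (A \ A') = P A := by
      rw [Set.inter_comm A' A]
      exact measure_inter_add_diff A hA'm
    rw [heq, ← h2] at h1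
    exact (ENNReal.add_right_inj (measure_ne_top P _)).mp h1
  calc ∫⁻ x in A', f x ∂P
      = ∫⁻ x in A' ∩ A, f x ∂P + ∫⁻ x in A' \ A, f x ∂P :=
        (lintegral_inter_add_diff f A' hA).symm
    _ ≤ ∫⁻ x in A' ∩ A, f x ∂P + ∫⁻ x in A \ A', f x ∂P := by
        gcongr _ + ?_
        calc ∫⁻ x in A' \ A, f x ∂P
            ≤ ∫⁻ _ in A' \ A, f c ∂P := setLIntegral_mono' (hA'm.diff hA) hle
          _ = f c * P (A' \ A) := setLIntegral_const _ _
          _ = f c * P (A \ A') := by rw [hmeq]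
          _ = ∫⁻ _ in A \ A', f c ∂P := (setLIntegral_const _ _).symm
          _ ≤ ∫⁻ x in A \ A', f x ∂P := setLIntegral_mono' (hA.diff hA'm) hge
    _ = ∫⁻ x in A ∩ A', f x ∂P + ∫⁻ x in A \ A', f x ∂P := by rw [Set.inter_comm]
    _ = ∫⁻ x in A, f x ∂P := by
        rcases hc with h | h <;> subst h
        · exact lintegral_inter_add_diff f A measurableSet_Iic
        · exact lintegral_inter_add_diff f A measurableSet_Iio

lemma prod_section_fst (P₁ P₂ : Measure Θ) [SFinite P₂]
    (U : Set (Θ × Θ)) (hUm : MeasurableSet U) (A B : Set Θ)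
    (hA : MeasurableSet A) (hB : MeasurableSet B) :
    (P₁.prod P₂) (U ∩ A ×ˢ B) = ∫⁻ x in A, P₂ ((Prod.mk x ⁻¹' U) ∩ B) ∂P₁ := by
  rw [Measure.prod_apply (hUm.inter (hA.prod hB)),
    ← lintegral_indicator hA (fun x => P₂ ((Prod.mk x ⁻¹' U) ∩ B))]
  congr 1
  ext x
  by_cases hx : x ∈ A
  · rw [Set.indicator_of_mem hx]
    congr 1
    ext y
    simp [hx]
  · rw [Set.indicator_of_notMem hx]
    have h0 : Prod.mk x ⁻¹' (U ∩ A ×ˢ B) = ∅ := by ext y; simp [hx]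
    rw [h0]; exact measure_empty

lemma prod_section_snd (P₁ P₂ : Measure Θ) [SFinite P₁] [SFinite P₂]
    (U : Set (Θ × Θ)) (hUm : MeasurableSet U) (A B : Set Θ)
    (hA : MeasurableSet A) (hB : MeasurableSet B) :
    (P₁.prod P₂) (U ∩ A ×ˢ B) = ∫⁻ y in B, P₁ ({x | (x, y) ∈ U} ∩ A) ∂P₂ := by
  rw [Measure.prod_apply_symm (hUm.inter (hA.prod hB)),
    ← lintegral_indicator hB (fun y => P₁ ({x | (x, y) ∈ U} ∩ A))]
  congr 1
  ext y
  by_cases hy : y ∈ B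
  · rw [Set.indicator_of_mem hy]
    congr 1
    ext x
    simp [hy, Set.mem_prod]
  · rw [Set.indicator_of_notMem hy]
    have h0 : (fun x => (x, y)) ⁻¹' (U ∩ A ×ˢ B) = ∅ := by ext x; simp [hy]
    rw [h0]; exact measure_empty

theorem stmt9
    (P₁ P₂ : Measure Θ) [IsProbabilityMeasure P₁] [IsProbabilityMeasure P₂]
    (U : Set (Θ × Θ)) (hUm : MeasurableSet U)
    -- U is an upper set for the componentwise order
    (hU : IsUpperSet U)
    (A₁ A₂ : Set Θ) (hA₁ : MeasurableSet A₁) (hA₂ : MeasurableSet A₂)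
    (hpos : 0 < (P₁.prod P₂) (A₁ ×ˢ A₂))
    -- A₁', A₂' are intervals with left endpoint 0
    (A₁' A₂' : Set Θ)
    (hA₁' : ∃ c : Θ, A₁' = Set.Iic c ∨ A₁' = Set.Iio c)
    (hA₂' : ∃ c : Θ, A₂' = Set.Iic c ∨ A₂' = Set.Iio c)
    (hA₁'eq : P₁ A₁' = P₁ A₁) (hA₂'eq : P₂ A₂' = P₂ A₂) :
    (P₁.prod P₂) (U ∩ A₁' ×ˢ A₂') ≤ (P₁.prod P₂) (U ∩ A₁ ×ˢ A₂) := by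
  have hA₁'m : MeasurableSet A₁' := by
    obtain ⟨c, h | h⟩ := hA₁' <;> subst h
    · exact measurableSet_Iic
    · exact measurableSet_Iio
  have hA₂'m : MeasurableSet A₂' := by
    obtain ⟨c, h | h⟩ := hA₂' <;> subst h
    · exact measurableSet_Iic
    · exact measurableSet_Iio
  have step1 : (P₁.prod P₂) (U ∩ A₁' ×ˢ A₂') ≤ (P₁.prod P₂) (U ∩ A₁ ×ˢ A₂') := by
    rw [prod_section_fst P₁ P₂ U hUm A₁' A₂' hA₁'m hA₂'m,
      prod_section_fst P₁ P₂ U hUm A₁ A₂' hA₁ hA₂'m]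
    apply key_lemma P₁ _ _ A₁ A₁' hA₁ hA₁' hA₁'eq
    intro x x' hxx'
    apply measure_mono
    apply Set.inter_subset_inter_left
    intro y hy
    exact hU (Prod.mk_le_mk.mpr ⟨hxx', le_rfl⟩) hy
  have step2 : (P₁.prod P₂) (U ∩ A₁ ×ˢ A₂') ≤ (P₁.prod P₂) (U ∩ A₁ ×ˢ A₂) := by
    rw [prod_section_snd P₁ P₂ U hUm A₁ A₂' hA₁ hA₂'m,
      prod_section_snd P₁ P₂ U hUm A₁ A₂ hA₁ hA₂]
    apply key_lemma P₂ _ _ A₂ A₂' hA₂ hA₂' hA₂'eq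
    intro y y' hyy'
    apply measure_mono
    apply Set.inter_subset_inter_left
    intro x hx
    exact hU (Prod.mk_le_mk.mpr ⟨le_rfl, hyy'⟩) hx
  exact le_trans step1 step2

end
end
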